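/- arXiv:math/0212063 — 5 statements merged into one kernel-verified Lean document; each statement's English description precedes it below -/
import Mathlib

section
/- If λ is a regular uncountable cardinal and a family S of countable sets of cardinality λ is free (has a transversal), then for every filtration ⟨S_α : α < λ⟩ of S (a continuous increasing chain of subfamilies of cardinality < λ with union S), the set of α < λ such that the quotient family S/S_α is free contains a closed unbounded subset of λ. -/
open Cardinal Set

/-- A family of sets is free if it admits an injective choice function (transversal). -/
def HasTransversal {A : Type*} (S : Set (Set A)) : Prop :=
  ∃ T : Set A → A, Set.InjOn T S ∧ ∀ s ∈ S, T s ∈ s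

/-- The quotient family `S/R = { s \ ⋃R : s ∈ S \ R }`. -/
def quotFam {A : Type*} (S R : Set (Set A)) : Set (Set A) :=
  (fun s => s \ ⋃₀ R) '' (S \ R)

/-- `C` is a closed unbounded subset of the ordinal `o`. -/
def IsClubIn (C : Set Ordinal) (o : Ordinal) : Prop :=
  C ⊆ Set.Iio o ∧ (∀ b < o, ∃ c ∈ C, b < c) ∧
    (∀ b < o, b ≠ 0 → (∀ d < b, ∃ c ∈ C, d < c ∧ c < b) → b ∈ C)

/-! Fix a transversal `T` of `S` and call `α` closed when every `s ∈ S` with `T s ∈ ⋃₀ F α`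
already lies in `F α`. For closed `α`, `T` itself is a transversal of `S / F α`. Closed
ordinals form a club: continuity of the chain closes them under limits, and since `⋃₀ F α`
has fewer than `λ` points, regularity of `λ` catches all `s` with `T s ∈ ⋃₀ F α` in some
`F γ`, `γ < λ`; iterating this `ω` times and taking the supremum (which stays below `λ`
because `cof λ > ω`) gives closed ordinals above any bound. -/

theorem hasTransversal_quotFam {A : Type*} {S R : Set (Set A)} {T : Set A → A}
    (hTinj : InjOn T S) (hTmem : ∀ s ∈ S, T s ∈ s) (hR : ∀ s ∈ S \ R, T s ∉ ⋃₀ R) :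
    HasTransversal (quotFam S R) := by
  set pre : Set A → Set A := Function.invFunOn (fun s => s \ ⋃₀ R) (S \ R)
  refine ⟨T ∘ pre, fun q hq q' hq' hqq' => ?_, fun q hq => ?_⟩
  · rw [← Function.invFunOn_eq hq, ← Function.invFunOn_eq hq',
      hTinj (Function.invFunOn_mem hq).1 (Function.invFunOn_mem hq').1 hqq']
  · have hpre : pre q ∈ S \ R := Function.invFunOn_mem hq
    have hTpre : T (pre q) ∈ pre q \ ⋃₀ R := ⟨hTmem _ hpre.1, hR _ hpre⟩
    rwa [show pre q \ ⋃₀ R = q from Function.invFunOn_eq hq] at hTpre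

theorem Cardinal.mk_sUnion_lt_of_countable {A : Type*} {κ : Cardinal} (hκ : ℵ₀ < κ)
    {F : Set (Set A)} (hF : #F < κ) (hcount : ∀ s ∈ F, s.Countable) : #(⋃₀ F) < κ := by
  refine (mk_sUnion_le F).trans_lt (mul_lt_of_lt hκ.le hF (lt_of_le_of_lt ?_ hκ))
  exact ciSup_le' fun s => (hcount s s.2).le_aleph0

theorem exists_lt_ord_subset_of_mk_lt {X : Type*} {κ : Cardinal} (hκ : κ.IsRegular)
    {F : Ordinal → Set X} (hmono : ∀ α β : Ordinal, α ≤ β → β < κ.ord → F α ⊆ F β)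
    {B : Set X} (hB : B ⊆ ⋃ α : Iio κ.ord, F α.1) (hBκ : #B < κ) :
    ∃ γ < κ.ord, B ⊆ F γ := by
  have hcover : ∀ s : B, ∃ α < κ.ord, s.1 ∈ F α := fun s => by
    obtain ⟨⟨α, hα⟩, hs⟩ := mem_iUnion.1 (hB s.2)
    exact ⟨α, hα, hs⟩
  choose f hfκ hf using hcover
  have hsup : ⨆ s, f s < κ.ord := Ordinal.iSup_lt_of_lt_cof (by rwa [hκ.cof_ord]) hfκ
  exact ⟨⨆ s, f s, hsup, fun s hs => hmono _ _ (Ordinal.le_iSup f ⟨s, hs⟩) hsup (hf ⟨s, hs⟩)⟩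

section Club

variable {X : Type*} {o : Ordinal} {F G : Ordinal → Set X}

theorem exists_gt_subset_of_aleph0_lt_cof (ho : ℵ₀ < o.cof)
    (hFmono : ∀ α β, α ≤ β → β < o → F α ⊆ F β) (hGmono : ∀ α β, α ≤ β → β < o → G α ⊆ G β)
    (hGcont : ∀ α < o, Order.IsSuccLimit α → G α ⊆ ⋃ β : Iio α, G β.1)
    (hcatch : ∀ α : Iio o, ∃ γ : Iio o, α < γ ∧ G α ⊆ F γ) {b : Ordinal} (hb : b < o) :
    ∃ α, b < α ∧ α < o ∧ G α ⊆ F α := by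
  choose g hgt hg using hcatch
  set a : ℕ → Iio o := fun n => g^[n] ⟨b, hb⟩
  have ha_succ : ∀ n, a (n + 1) = g (a n) := fun n => Function.iterate_succ_apply' g n _
  have ha_lt : ∀ n, (a n : Ordinal) < a (n + 1) := fun n => ha_succ n ▸ hgt (a n)
  set α := ⨆ n, (a n : Ordinal)
  have hle : ∀ n, (a n : Ordinal) ≤ α := Ordinal.le_iSup _
  have hαo : α < o := Ordinal.lift_iSup_lt_of_lt_cof (by simpa using ho) fun n => (a n).2
  -- the `a n` strictly increase, so none of them is the supremum
  have hlim : Order.IsSuccLimit α := by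
    by_contra h
    obtain ⟨n, hn⟩ := exists_eq_ciSup_of_not_isSuccLimit Ordinal.bddAbove_of_small h
    exact (ha_lt n).not_ge (hn ▸ hle (n + 1))
  refine ⟨α, (ha_lt 0).trans_le (hle 1), hαo, fun s hs => ?_⟩
  obtain ⟨β, hβ⟩ := mem_iUnion.1 (hGcont α hαo hlim hs)
  obtain ⟨n, hn⟩ := Ordinal.lt_iSup_iff.1 β.2
  have hsF : s ∈ F (a (n + 1)) := ha_succ n ▸ hg (a n) (hGmono _ _ hn.le (a n).2 hβ)
  exact hFmono _ _ (hle (n + 1)) hαo hsF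

theorem isClubIn_setOf_subset (ho : ℵ₀ < o.cof)
    (hFmono : ∀ α β, α ≤ β → β < o → F α ⊆ F β) (hGmono : ∀ α β, α ≤ β → β < o → G α ⊆ G β)
    (hGcont : ∀ α < o, Order.IsSuccLimit α → G α ⊆ ⋃ β : Iio α, G β.1)
    (hcatch : ∀ α < o, ∃ γ < o, G α ⊆ F γ) :
    IsClubIn {α | α < o ∧ G α ⊆ F α} o := by
  have hlim : Order.IsSuccLimit o := Ordinal.one_lt_cof_iff.1 (one_lt_aleph0.trans ho)
  have hcatch' : ∀ α : Iio o, ∃ γ : Iio o, α < γ ∧ G α ⊆ F γ := fun ⟨α, hα⟩ => by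
    obtain ⟨γ, hγ, hGF⟩ := hcatch α hα
    have hγ' : max γ (Order.succ α) < o := max_lt hγ (hlim.succ_lt hα)
    exact ⟨⟨_, hγ'⟩, (Order.lt_succ α).trans_le (le_max_right _ _),
      hGF.trans (hFmono _ _ (le_max_left _ _) hγ')⟩
  refine ⟨fun α hα => hα.1, fun b hb => ?_, fun b hb hb0 hacc => ⟨hb, ?_⟩⟩
  · obtain ⟨α, hbα, hαo, hGF⟩ :=
      exists_gt_subset_of_aleph0_lt_cof ho hFmono hGmono hGcont hcatch' hb
    exact ⟨α, ⟨hαo, hGF⟩, hbα⟩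
  · have hblim : Order.IsSuccLimit b := by
      refine Ordinal.isSuccLimit_iff.2 ⟨hb0, Order.isSuccPrelimit_of_succ_lt fun d hd => ?_⟩
      obtain ⟨c, -, hdc, hcb⟩ := hacc d hd
      exact (Order.succ_le_of_lt hdc).trans_lt hcb
    intro s hs
    obtain ⟨β, hβ⟩ := mem_iUnion.1 (hGcont b hb hblim hs)
    obtain ⟨c, ⟨hco, hGF⟩, hβc, hcb⟩ := hacc β β.2
    exact hFmono c b hcb.le hb (hGF (hGmono β c hβc.le hco hβ))

end Club

theorem stmt0_general {A : Type*} (lam : Cardinal) (hreg : lam.IsRegular) (hunc : ℵ₀ < lam)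
    (S : Set (Set A)) (hct : ∀ s ∈ S, s.Countable)
    (hfree : HasTransversal S) (F : Ordinal → Set (Set A))
    (hmono : ∀ α β : Ordinal, α ≤ β → β < lam.ord → F α ⊆ F β)
    (hsub : ∀ α < lam.ord, F α ⊆ S)
    (hsize : ∀ α < lam.ord, #(F α) < lam)
    (hcont : ∀ α < lam.ord, Order.IsSuccLimit α → F α = ⋃ β : Set.Iio α, F β.1)
    (hunion : S = ⋃ α : Set.Iio lam.ord, F α.1) :
    ∃ C : Set Ordinal, IsClubIn C lam.ord ∧
      ∀ α ∈ C, HasTransversal (quotFam S (F α)) := by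
  obtain ⟨T, hTinj, hTmem⟩ := hfree
  set G : Ordinal → Set (Set A) := fun α => {s ∈ S | T s ∈ ⋃₀ F α}
  have hGmono : ∀ α β : Ordinal, α ≤ β → β < lam.ord → G α ⊆ G β := fun α β hαβ hβ s hs =>
    ⟨hs.1, sUnion_mono (hmono α β hαβ hβ) hs.2⟩
  have hGcont : ∀ α < lam.ord, Order.IsSuccLimit α → G α ⊆ ⋃ β : Iio α, G β.1 := by
    rintro α hα hlim s ⟨hs, hTs⟩
    rw [hcont α hα hlim, sUnion_iUnion] at hTs
    obtain ⟨β, hβ⟩ := mem_iUnion.1 hTs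
    exact mem_iUnion.2 ⟨β, hs, hβ⟩
  have hGsize : ∀ α < lam.ord, #(G α) < lam := fun α hα =>
    calc #(G α) = #(T '' G α) := (mk_image_eq_of_injOn T _ (hTinj.mono (sep_subset _ _))).symm
      _ ≤ #(⋃₀ F α) := mk_le_mk_of_subset (image_subset_iff.2 fun s hs => hs.2)
      _ < lam := mk_sUnion_lt_of_countable hunc (hsize α hα) fun s hs => hct s (hsub α hα hs)
  have hcatch : ∀ α < lam.ord, ∃ γ < lam.ord, G α ⊆ F γ := fun α hα =>
    exists_lt_ord_subset_of_mk_lt hreg hmono (hunion ▸ sep_subset _ _) (hGsize α hα)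
  refine ⟨{α | α < lam.ord ∧ G α ⊆ F α},
    isClubIn_setOf_subset (by rwa [hreg.cof_ord]) hmono hGmono hGcont hcatch, ?_⟩
  rintro α ⟨-, hGF⟩
  exact hasTransversal_quotFam hTinj hTmem fun s hs hTs => hs.2 (hGF ⟨hs.1, hTs⟩)

/-- If `λ` is regular uncountable, `S` a family of countable sets with `|S| = λ` which is
free, then for every filtration `⟨F α : α < λ⟩` of `S`, the set of `α` with `S/F α` free
contains a club of `λ`. -/
theorem stmt0 {A : Type*} (lam : Cardinal) (hreg : lam.IsRegular) (hunc : ℵ₀ < lam)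
    (S : Set (Set A)) (hct : ∀ s ∈ S, s.Countable) (hcard : #S = lam)
    (hfree : HasTransversal S) (F : Ordinal → Set (Set A))
    (hmono : ∀ α β : Ordinal, α ≤ β → β < lam.ord → F α ⊆ F β)
    (hsub : ∀ α < lam.ord, F α ⊆ S)
    (hsize : ∀ α < lam.ord, #(F α) < lam)
    (hcont : ∀ α < lam.ord, Order.IsSuccLimit α → F α = ⋃ β : Set.Iio α, F β.1)
    (hunion : S = ⋃ α : Set.Iio lam.ord, F α.1) :
    ∃ C : Set Ordinal, IsClubIn C lam.ord ∧
      ∀ α ∈ C, HasTransversal (quotFam S (F α)) :=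
  stmt0_general lam hreg hunc S hct hfree F hmono hsub hsize hcont hunion
end

section
/- Let μ be a singular cardinal with cf(μ) = κ, let ⟨μ_ξ : ξ < κ⟩ be an increasing sequence of regular cardinals cofinal in μ with μ_0 > κ⁺ and epsilon < μ_0 for a fixed ordinal epsilon < μ, and let ⟨f_α : α < μ⁺⟩ be a scale. Then the 'inward' player II has a winning strategy in the cub-game of length epsilon on the set good(f) of good points of the scale, where player II must ensure that every limit of the produced increasing sequence of ordinals whose index has cofinality different from κ lands in good(f). -/
open Cardinal Set

/-- `α` is a good point for the sequence `f` (with index set `κo = cf(μ).ord`):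
there are an unbounded `A ⊆ α` and `ζ < κo` with `f β ξ < f γ ξ` for all
`β < γ` in `A` and all `ζ ≤ ξ < κo`. -/
def GoodPt (f : Ordinal → Ordinal → Ordinal) (κo : Ordinal) (α : Ordinal) : Prop :=
  ∃ A : Set Ordinal, A ⊆ Set.Iio α ∧ (∀ b < α, ∃ c ∈ A, b < c) ∧
    ∃ ζ < κo, ∀ β ∈ A, ∀ γ ∈ A, β < γ → ∀ ξ, ζ ≤ ξ → ξ < κo → f β ξ < f γ ξ

/-- restriction of a history to the moves before stage `i` (zero elsewhere). -/
noncomputable def restrictSeq (p : Ordinal → Ordinal) (i : Ordinal) : Ordinal → Ordinal :=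
  fun j => if j < i then p j else 0

/-- replace the value of `p` at `i` by `v`. -/
noncomputable def extendSeq (p : Ordinal → Ordinal) (i v : Ordinal) : Ordinal → Ordinal :=
  fun j => if j = i then v else p j

/-- a legal position of length `i` in the cub-game on `lam`: a strictly increasing
sequence of ordinals below `lam` taking the supremum at limit stages. -/
def IsLegalPos (lam i : Ordinal) (p : Ordinal → Ordinal) : Prop :=
  (∀ j < i, p j < lam) ∧
  (∀ j k : Ordinal, j < k → k < i → p j < p k) ∧
  (∀ j < i, Order.IsSuccLimit j → p j = ⨆ k : Set.Iio j, p k.1)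

/-- the odd stages, at which player II moves. -/
def IsOddStage (i : Ordinal) : Prop :=
  ∃ (d : Ordinal) (n : ℕ), (d = 0 ∨ Order.IsSuccLimit d) ∧ i = d + (2 * n + 1 : ℕ)

/-- Player II has a winning strategy in the cub-game `𝔊^x_eps(A, lam)`: a strategy
producing legal moves at all odd stages such that in every legal play of length `eps`
following it, every limit stage `i` with `cf i ∈ x` lands in `A`. -/
def IIWinsCubGame (x : Set Cardinal) (eps lam : Ordinal) (A : Set Ordinal) : Prop :=
  ∃ σ : (Ordinal → Ordinal) → Ordinal,
    (∀ i < eps, IsOddStage i → ∀ p, IsLegalPos lam i p →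
      IsLegalPos lam (i + 1) (extendSeq p i (σ (restrictSeq p i)))) ∧
    (∀ p, IsLegalPos lam eps p →
      (∀ i < eps, IsOddStage i → p i = σ (restrictSeq p i)) →
      ∀ i < eps, Order.IsSuccLimit i → i.cof ∈ x → p i ∈ A)

/-
At an odd stage `i`, player II plays some `v` above all earlier moves such that `f_v` dominates
every earlier `f_{p j}` from one common threshold `ζ < κ` on. Such a `v` exists: the pointwise
supremum of fewer than `μ_0` functions of the product is still in the product (each `μ_ξ` is
regular), so the scale eventually exceeds it at some `f_α`, and `α` can be raised above the
earlier moves because the scale is increasing modulo bounded sets.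

At a limit stage `i` with `cf i ≠ κ` the thresholds `ζ_k < κ` of the odd stages `k < i` are
bounded by a single `z < κ` on a cofinal set of odd stages: if `cf i < κ` take a cofinal
sequence of length `cf i` and use the regularity of `κ`; if `cf i > κ`, pigeonhole. The moves at
those stages form an unbounded subset of `p i` that is increasing from `z` on, so `p i` is good.
-/

universe u

theorem iSup_Iio_lt_of_card_lt_cof {o a : Ordinal.{u}} {g : Iio o → Ordinal.{u}}
    (h : o.card < a.cof) (hg : ∀ j, g j < a) : ⨆ j, g j < a :=
  Ordinal.lift_iSup_lt_of_lt_cof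
    (by simpa [Cardinal.mk_Iio_ordinal, ← Ordinal.lift_cof, ← Ordinal.lift_card] using h) hg

theorem iSup_Iio_add_one_lt_of_card_lt_cof {o a : Ordinal.{u}} {g : Iio o → Ordinal.{u}}
    (h : o.card < a.cof) (hg : ∀ j, g j < a) : ⨆ j, g j + 1 < a :=
  Ordinal.lift_iSup_add_one_lt_of_lt_cof
    (by simpa [Cardinal.mk_Iio_ordinal, ← Ordinal.lift_cof, ← Ordinal.lift_card] using h) hg

theorem IsOddStage.exists_between (j : Ordinal) : ∃ k, IsOddStage k ∧ j < k ∧ k ≤ j + 2 := by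
  obtain ⟨n, hn⟩ := Ordinal.lt_omega0.1 (Ordinal.mod_lt j Ordinal.omega0_ne_zero)
  set d := Ordinal.omega0 * (j / Ordinal.omega0)
  have hj : d + (n : Ordinal) = j := by rw [← hn]; exact Ordinal.div_add_mod j _
  have hd : d = 0 ∨ Order.IsSuccLimit d := by
    rcases eq_or_ne (j / Ordinal.omega0) 0 with h | h
    · left; simp [d, h]
    · exact .inr (Ordinal.isSuccLimit_mul_left Ordinal.isSuccLimit_omega0 (pos_iff_ne_zero.2 h))
  rcases Nat.even_or_odd n with ⟨m, rfl⟩ | ⟨m, rfl⟩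
  · refine ⟨j + 1, ⟨d, m, hd, ?_⟩, lt_add_one j, add_le_add_right one_le_two j⟩
    rw [← hj, add_assoc]; congr 1; exact_mod_cast (by omega : m + m + 1 = 2 * m + 1)
  · refine ⟨j + 2, ⟨d, m + 1, hd, ?_⟩, ?_, le_rfl⟩
    · rw [← hj, add_assoc]; congr 1; exact_mod_cast (by omega : 2 * m + 1 + 2 = 2 * (m + 1) + 1)
    · exact (lt_add_one j).trans_le (add_le_add_right one_le_two j)

theorem IsOddStage.one_le {i : Ordinal} (h : IsOddStage i) : 1 ≤ i := by
  obtain ⟨d, n, -, rfl⟩ := h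
  calc (1 : Ordinal) ≤ ((2 * n + 1 : ℕ) : Ordinal) := by exact_mod_cast Nat.le_add_left 1 (2 * n)
    _ ≤ d + ((2 * n + 1 : ℕ) : Ordinal) := le_add_self

theorem IsOddStage.not_isSuccLimit {i : Ordinal} (h : IsOddStage i) : ¬ Order.IsSuccLimit i := by
  obtain ⟨d, n, -, rfl⟩ := h
  have : d + ((2 * n + 1 : ℕ) : Ordinal) = Order.succ (d + ((2 * n : ℕ) : Ordinal)) := by
    push_cast; rw [← add_assoc, Order.succ_eq_add_one]
  rw [this]
  exact Order.not_isSuccLimit_succ _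

def CofinalBelow (i : Ordinal) (S : Set Ordinal) : Prop :=
  S ⊆ Iio i ∧ ∀ c < i, ∃ k ∈ S, c < k

theorem cofinalBelow_setOf_isOddStage {i : Ordinal} (hi : Order.IsSuccLimit i) :
    CofinalBelow i {k | IsOddStage k ∧ k < i} := by
  refine ⟨fun k hk => hk.2, fun c hc => ?_⟩
  obtain ⟨k, hk, hck, hkc⟩ := IsOddStage.exists_between c
  exact ⟨k, ⟨hk, hkc.trans_lt (by exact_mod_cast hi.add_natCast_lt hc 2)⟩, hck⟩

section Pigeonhole

variable {i κo : Ordinal} {S : Set Ordinal} {ζ : Ordinal → Ordinal}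

theorem CofinalBelow.exists_bounded_of_cof_lt (hS : CofinalBelow i S) (hζ : ∀ k ∈ S, ζ k < κo)
    (h : i.cof < κo.cof) : ∃ z < κo, CofinalBelow i {k ∈ S | ζ k ≤ z} := by
  obtain ⟨s, hs⟩ := Ordinal.exists_isFundamentalSeq (o := i) rfl
  choose k hkS hsk using fun b => hS.2 (s b) (s b).2
  refine ⟨⨆ b, ζ (k b), iSup_Iio_lt_of_card_lt_cof (by rwa [card_ord]) fun b => hζ _ (hkS b),
    fun k' hk' => hS.1 hk'.1, fun c hc => ?_⟩
  obtain ⟨_, ⟨b, rfl⟩, hcb⟩ := hs.isCofinal_range ⟨c, hc⟩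
  exact ⟨k b, ⟨hkS b, Ordinal.le_iSup _ b⟩, (Subtype.mk_le_mk.1 hcb).trans_lt (hsk b)⟩

theorem CofinalBelow.exists_bounded_of_card_lt_cof (hS : CofinalBelow i S)
    (hζ : ∀ k ∈ S, ζ k < κo) (h : κo.card < i.cof) :
    ∃ z < κo, CofinalBelow i {k ∈ S | ζ k ≤ z} := by
  by_contra! hcon
  have hbound : ∀ z : Iio κo, ∃ c < i, ∀ k ∈ S, ζ k ≤ z → k ≤ c := by
    intro z
    by_contra! hz
    refine hcon z z.2 ⟨fun k hk => hS.1 hk.1, fun c hc => ?_⟩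
    obtain ⟨k, hkS, hkz, hck⟩ := hz c hc
    exact ⟨k, ⟨hkS, hkz⟩, hck⟩
  choose C hCi hC using hbound
  have hsup : ⨆ z, C z < i := iSup_Iio_lt_of_card_lt_cof h hCi
  obtain ⟨k, hkS, hk⟩ := hS.2 _ hsup
  exact (hk.trans_le ((hC ⟨ζ k, hζ k hkS⟩ k hkS le_rfl).trans (Ordinal.le_iSup C _))).false

theorem CofinalBelow.exists_bounded_of_cof_ne {κ : Cardinal} (hκ : κ.IsRegular)
    (hS : CofinalBelow i S) (hζ : ∀ k ∈ S, ζ k < κ.ord) (h : i.cof ≠ κ) :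
    ∃ z < κ.ord, CofinalBelow i {k ∈ S | ζ k ≤ z} := by
  rcases h.lt_or_gt with h | h
  · exact hS.exists_bounded_of_cof_lt hζ (by rwa [hκ.cof_ord])
  · exact hS.exists_bounded_of_card_lt_cof hζ (by rwa [Cardinal.card_ord])

end Pigeonhole

section Game

variable {lam eps i : Ordinal} {p : Ordinal → Ordinal}

theorem restrictSeq_of_lt {j : Ordinal} (h : j < i) : restrictSeq p i j = p j := if_pos h

-- A strategy only sees `restrictSeq p i`. For a legal (strictly increasing) `p` and `i ≥ 1`,
-- the least `j ≥ 1` where it vanishes is `i`, so the strategy can recover the stage.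
noncomputable def stageOf (q : Ordinal → Ordinal) : Ordinal := sInf {j | 1 ≤ j ∧ q j = 0}

theorem IsLegalPos.mono (hp : IsLegalPos lam eps p) (hi : i ≤ eps) : IsLegalPos lam i p :=
  ⟨fun j hj => hp.1 j (hj.trans_le hi), fun j k hjk hk => hp.2.1 j k hjk (hk.trans_le hi),
    fun j hj => hp.2.2 j (hj.trans_le hi)⟩

theorem IsLegalPos.strictMonoOn (hp : IsLegalPos lam eps p) (hi : i < eps) :
    StrictMonoOn p (Iic i) :=
  fun _ _ _ hk hjk => hp.2.1 _ _ hjk ((mem_Iic.1 hk).trans_lt hi)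

theorem IsLegalPos.exists_lt_of_lt (hp : IsLegalPos lam eps p) (hi : i < eps)
    (hlim : Order.IsSuccLimit i) {b : Ordinal} (hb : b < p i) : ∃ j < i, b < p j := by
  rw [hp.2.2 i hi hlim] at hb
  obtain ⟨⟨j, hj⟩, hbj⟩ := exists_lt_of_lt_ciSup' hb
  exact ⟨j, hj, hbj⟩

theorem IsLegalPos.stageOf_restrictSeq (hp : IsLegalPos lam i p) (hi : 1 ≤ i) :
    stageOf (restrictSeq p i) = i := by
  have hmem : i ∈ {j | 1 ≤ j ∧ restrictSeq p i j = 0} := ⟨hi, by simp [restrictSeq]⟩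
  refine le_antisymm (csInf_le' hmem) (le_csInf ⟨i, hmem⟩ ?_)
  rintro j ⟨hj, hpj⟩
  by_contra! hji
  rw [restrictSeq_of_lt hji] at hpj
  exact (hp.2.1 0 j (zero_lt_one.trans_le hj) hji).not_ge (by rw [hpj]; exact zero_le)

theorem IsLegalPos.extendSeq (hp : IsLegalPos lam i p) (hi : ¬ Order.IsSuccLimit i) {v : Ordinal}
    (hv : v < lam) (hpv : ∀ j < i, p j < v) : IsLegalPos lam (i + 1) (_root_.extendSeq p i v) := by
  have hle : ∀ {j}, j < i + 1 ↔ j ≤ i := Order.lt_add_one_iff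
  have hext : ∀ {j}, j < i → _root_.extendSeq p i v j = p j := fun hj => if_neg hj.ne
  have hexti : _root_.extendSeq p i v i = v := if_pos rfl
  refine ⟨fun j hj => ?_, fun j k hjk hk => ?_, fun j hj hlim => ?_⟩
  · rcases (hle.1 hj).lt_or_eq with hj | rfl
    · rw [hext hj]; exact hp.1 j hj
    · rwa [hexti]
  · rcases (hle.1 hk).lt_or_eq with hk | rfl
    · rw [hext hk, hext (hjk.trans hk)]; exact hp.2.1 j k hjk hk
    · rw [hexti, hext hjk]; exact hpv j hjk
  · have hji : j < i := (hle.1 hj).lt_of_ne (by rintro rfl; exact hi hlim)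
    rw [hext hji, hp.2.2 j hji hlim]
    exact iSup_congr fun k => (hext (k.2.trans hji)).symm

theorem iiWinsCubGame_of_forall_exists_move {x : Set Cardinal} {A : Set Ordinal}
    (R : Ordinal → (Ordinal → Ordinal) → Ordinal → Prop)
    (hmove : ∀ i < eps, ∀ q : Ordinal → Ordinal, (∀ j < i, q j < lam) →
      ∃ v < lam, (∀ j < i, q j < v) ∧ R i q v)
    (hwin : ∀ p, IsLegalPos lam eps p → (∀ k < eps, IsOddStage k → R k (restrictSeq p k) (p k)) →
      ∀ i < eps, Order.IsSuccLimit i → i.cof ∈ x → p i ∈ A) :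
    IIWinsCubGame x eps lam A := by
  have hσ : ∀ q, ∃ v, stageOf q < eps → (∀ j < stageOf q, q j < lam) →
      v < lam ∧ (∀ j < stageOf q, q j < v) ∧ R (stageOf q) q v := by
    intro q
    by_cases h : stageOf q < eps ∧ ∀ j < stageOf q, q j < lam
    · obtain ⟨v, hv⟩ := hmove _ h.1 q h.2
      exact ⟨v, fun _ _ => hv⟩
    · exact ⟨0, fun h₁ h₂ => absurd ⟨h₁, h₂⟩ h⟩
  choose σ hσ using hσ
  have hσmove : ∀ i < eps, IsOddStage i → ∀ p, IsLegalPos lam i p →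
      σ (restrictSeq p i) < lam ∧ (∀ j < i, p j < σ (restrictSeq p i)) ∧
        R i (restrictSeq p i) (σ (restrictSeq p i)) := by
    intro i hi hodd p hp
    have hstage := hp.stageOf_restrictSeq hodd.one_le
    obtain ⟨hv, hpv, hR⟩ := hσ (restrictSeq p i) (by rwa [hstage])
      (fun j hj => by rw [hstage] at hj; rw [restrictSeq_of_lt hj]; exact hp.1 j hj)
    rw [hstage] at hpv hR
    exact ⟨hv, fun j hj => (restrictSeq_of_lt hj).symm.trans_lt (hpv j hj), hR⟩
  refine ⟨σ, fun i hi hodd p hp => ?_, fun p hp hfollow => hwin p hp fun k hk hodd => ?_⟩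
  · obtain ⟨hv, hpv, -⟩ := hσmove i hi hodd p hp
    exact hp.extendSeq hodd.not_isSuccLimit hv hpv
  · rw [hfollow k hk hodd]
    exact (hσmove k hk hodd p (hp.mono hk.le)).2.2

end Game

section Scale

variable {f : Ordinal → Ordinal → Ordinal} {κo lam i : Ordinal}

def TailLT (ζ κo : Ordinal) (g h : Ordinal → Ordinal) : Prop :=
  ∀ ξ, ζ ≤ ξ → ξ < κo → g ξ < h ξ

theorem TailLT.mono {ζ ζ' : Ordinal} {g h : Ordinal → Ordinal} (hlt : TailLT ζ κo g h)
    (hζ : ζ ≤ ζ') : TailLT ζ' κo g h :=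
  fun ξ hξ => hlt ξ (hζ.trans hξ)

theorem TailLT.trans {ζ ζ' : Ordinal} {g h k : Ordinal → Ordinal} (hgh : TailLT ζ κo g h)
    (hhk : TailLT ζ' κo h k) : TailLT (max ζ ζ') κo g k :=
  fun ξ hξ hξκ => (hgh ξ (le_of_max_le_left hξ) hξκ).trans (hhk ξ (le_of_max_le_right hξ) hξκ)

theorem tailLT_of_le_of_tailLT {ζ : Ordinal} {g h k : Ordinal → Ordinal} (hgh : ∀ ξ, g ξ ≤ h ξ)
    (hhk : TailLT ζ κo h k) : TailLT ζ κo g k :=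
  fun ξ hξ hξκ => (hgh ξ).trans_lt (hhk ξ hξ hξκ)

def UniformlyDominates (f : Ordinal → Ordinal → Ordinal) (κo i : Ordinal) (q : Ordinal → Ordinal)
    (v : Ordinal) : Prop :=
  ∃ ζ < κo, ∀ j < i, TailLT ζ κo (f (q j)) (f v)

theorem uniformlyDominates_restrictSeq {v : Ordinal} {q : Ordinal → Ordinal} :
    UniformlyDominates f κo i (restrictSeq q i) v ↔ UniformlyDominates f κo i q v := by
  refine exists_congr fun ζ => and_congr_right fun _ => forall₂_congr fun j hj => ?_
  rw [restrictSeq_of_lt hj]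

theorem exists_uniformlyDominates {bound q : Ordinal → Ordinal}
    (hf : ∀ α < lam, ∀ ξ < κo, f α ξ < bound ξ)
    (hcofinal : ∀ g : Ordinal → Ordinal, (∀ ξ < κo, g ξ < bound ξ) →
      ∃ α < lam, ∃ ζ < κo, TailLT ζ κo g (f α))
    (hbound : ∀ ξ < κo, i.card < (bound ξ).cof) (hq : ∀ j < i, q j < lam) :
    ∃ α < lam, UniformlyDominates f κo i q α := by
  have hg : ∀ ξ < κo, ⨆ j : Iio i, f (q j) ξ < bound ξ := fun ξ hξ =>
    iSup_Iio_lt_of_card_lt_cof (hbound ξ hξ) fun j => hf _ (hq j j.2) ξ hξ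
  obtain ⟨α, hα, ζ, hζ, hgα⟩ := hcofinal _ hg
  exact ⟨α, hα, ζ, hζ, fun j hj =>
    tailLT_of_le_of_tailLT (fun ξ => Ordinal.le_iSup (fun j : Iio i => f (q j) ξ) ⟨j, hj⟩) hgα⟩

theorem exists_gt_uniformlyDominates {bound q : Ordinal → Ordinal}
    (hf : ∀ α < lam, ∀ ξ < κo, f α ξ < bound ξ)
    (hinc : ∀ α β : Ordinal, α < β → β < lam → ∃ ζ < κo, TailLT ζ κo (f α) (f β))
    (hcofinal : ∀ g : Ordinal → Ordinal, (∀ ξ < κo, g ξ < bound ξ) →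
      ∃ α < lam, ∃ ζ < κo, TailLT ζ κo g (f α))
    (hbound : ∀ ξ < κo, i.card < (bound ξ).cof) (hlam : i.card < lam.cof)
    (hq : ∀ j < i, q j < lam) :
    ∃ v < lam, (∀ j < i, q j < v) ∧ UniformlyDominates f κo i q v := by
  obtain ⟨α, hα, ζ, hζ, hdom⟩ := exists_uniformlyDominates hf hcofinal hbound hq
  have hβ : ⨆ j : Iio i, q j + 1 < lam :=
    iSup_Iio_add_one_lt_of_card_lt_cof hlam fun j => hq j j.2
  have hqβ : ∀ j < i, q j < ⨆ j : Iio i, q j + 1 := fun j hj =>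
    Ordinal.lt_iSup_add_one (fun j : Iio i => q j) ⟨j, hj⟩
  rcases le_or_gt (⨆ j : Iio i, q j + 1) α with hβα | hαβ
  · exact ⟨α, hα, fun j hj => (hqβ j hj).trans_le hβα, ζ, hζ, hdom⟩
  · obtain ⟨ζ', hζ', hαβ'⟩ := hinc α _ hαβ hβ
    exact ⟨_, hβ, hqβ, max ζ ζ', max_lt hζ hζ', fun j hj => (hdom j hj).trans hαβ'⟩

theorem goodPt_of_cofinalBelow {p : Ordinal → Ordinal} {z : Ordinal} {K : Set Ordinal}
    (hmono : StrictMonoOn p (Iic i)) (hsup : ∀ b < p i, ∃ j < i, b < p j)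
    (hK : CofinalBelow i K) (hz : z < κo)
    (hdom : ∀ k ∈ K, ∀ j < k, TailLT z κo (f (p j)) (f (p k))) :
    GoodPt f κo (p i) := by
  have hKi : ∀ k ∈ K, k ∈ Iic i := fun k hk => Iio_subset_Iic_self (hK.1 hk)
  refine ⟨p '' K, ?_, fun b hb => ?_, z, hz, ?_⟩
  · rintro _ ⟨k, hk, rfl⟩
    exact hmono (hKi k hk) self_mem_Iic (hK.1 hk)
  · obtain ⟨j, hj, hbj⟩ := hsup b hb
    obtain ⟨k, hk, hjk⟩ := hK.2 j hj
    exact ⟨p k, mem_image_of_mem p hk, hbj.trans (hmono hj.le (hKi k hk) hjk)⟩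
  · rintro _ ⟨j, hj, rfl⟩ _ ⟨k, hk, rfl⟩ hjk
    exact hdom k hk j ((hmono.lt_iff_lt (hKi j hj) (hKi k hk)).1 hjk)

theorem goodPt_of_uniformlyDominates {κ : Cardinal} (hκ : κ.IsRegular) {p : Ordinal → Ordinal}
    (hi : Order.IsSuccLimit i) (hcof : i.cof ≠ κ) (hmono : StrictMonoOn p (Iic i))
    (hsup : ∀ b < p i, ∃ j < i, b < p j)
    (hdom : ∀ k < i, IsOddStage k → UniformlyDominates f κ.ord k p (p k)) :
    GoodPt f κ.ord (p i) := by
  have hζ : ∀ k ∈ {k | IsOddStage k ∧ k < i},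
      ∃ ζ < κ.ord, ∀ j < k, TailLT ζ κ.ord (f (p j)) (f (p k)) :=
    fun k hk => hdom k hk.2 hk.1
  choose! ζ hζκ hζdom using hζ
  obtain ⟨z, hz, hK⟩ := (cofinalBelow_setOf_isOddStage hi).exists_bounded_of_cof_ne hκ hζκ hcof
  exact goodPt_of_cofinalBelow hmono hsup hK hz fun k hk j hj => (hζdom k hk.1 j hj).mono hk.2

end Scale

theorem stmt3_general (μ κ : Cardinal) (μs : Ordinal → Cardinal)
    (f : Ordinal → Ordinal → Ordinal) (eps : Ordinal)
    (hinf : ℵ₀ ≤ μ) (hκ : μ.ord.cof = κ)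
    (hreg : ∀ ξ < κ.ord, (μs ξ).IsRegular)
    (hμs : ∀ ξ η : Ordinal, ξ < η → η < κ.ord → μs ξ < μs η)
    (heps0 : eps < (μs 0).ord) (hepsμ : eps < μ.ord)
    (hf : ∀ α < (Order.succ μ).ord, ∀ ξ < κ.ord, f α ξ < (μs ξ).ord)
    (hinc : ∀ α β : Ordinal, α < β → β < (Order.succ μ).ord →
      ∃ ζ < κ.ord, ∀ ξ, ζ ≤ ξ → ξ < κ.ord → f α ξ < f β ξ)
    (hcofinal : ∀ g : Ordinal → Ordinal, (∀ ξ < κ.ord, g ξ < (μs ξ).ord) →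
      ∃ α < (Order.succ μ).ord, ∃ ζ < κ.ord, ∀ ξ, ζ ≤ ξ → ξ < κ.ord → g ξ < f α ξ) :
    IIWinsCubGame {c : Cardinal | c.IsRegular ∧ c.ord < (Order.succ μ).ord ∧ c ≠ κ}
      eps (Order.succ μ).ord {α | GoodPt f κ.ord α} := by
  have hκreg : κ.IsRegular := hκ ▸ Cardinal.isRegular_cof (Cardinal.isSuccLimit_ord hinf)
  have hμs0 : ∀ ξ < κ.ord, (μs 0).ord ≤ (μs ξ).ord := fun ξ hξ => by
    rcases (zero_le (a := ξ)).eq_or_lt with rfl | hξ0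
    · rfl
    · exact Cardinal.ord_le_ord.2 (hμs 0 ξ hξ0 hξ).le
  refine iiWinsCubGame_of_forall_exists_move (UniformlyDominates f κ.ord)
    (fun i hi q hq => exists_gt_uniformlyDominates hf hinc hcofinal (fun ξ hξ => ?_) ?_ hq) ?_
  · rw [(hreg ξ hξ).cof_ord, ← Cardinal.lt_ord]
    exact hi.trans (heps0.trans_le (hμs0 ξ hξ))
  · rw [(Cardinal.isRegular_succ hinf).cof_ord, ← Cardinal.lt_ord]
    exact hi.trans (hepsμ.trans (Cardinal.ord_lt_ord.2 (Order.lt_succ μ)))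
  · rintro p hp hdom i hi hlim ⟨-, -, hcof⟩
    exact goodPt_of_uniformlyDominates hκreg hlim hcof (hp.strictMonoOn hi)
      (fun b => hp.exists_lt_of_lt hi hlim)
      fun k hk hodd => uniformlyDominates_restrictSeq.1 (hdom k (hk.trans hi) hodd)

/-- For a singular `μ` of cofinality `κ` with a scale `⟨f_α : α < μ⁺⟩` and any ordinal
`eps < μ_0` (so `eps < μ`), player II wins the cub-game of length `eps` on the set of
good points, where limits are checked at all regular cofinalities below `μ⁺` except `κ`. -/
theorem stmt3 (μ κ : Cardinal) (μs : Ordinal → Cardinal)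
    (f : Ordinal → Ordinal → Ordinal) (eps : Ordinal)
    (hinf : ℵ₀ ≤ μ) (hκ : μ.ord.cof = κ) (hsing : κ < μ)
    (hreg : ∀ ξ < κ.ord, (μs ξ).IsRegular)
    (hμs : ∀ ξ η : Ordinal, ξ < η → η < κ.ord → μs ξ < μs η)
    (hlt : ∀ ξ < κ.ord, μs ξ < μ)
    (hcofμ : ∀ c < μ, ∃ ξ < κ.ord, c < μs ξ)
    (hμ0 : Order.succ κ < μs 0)
    (heps0 : eps < (μs 0).ord) (hepsμ : eps < μ.ord)
    (hf : ∀ α < (Order.succ μ).ord, ∀ ξ < κ.ord, f α ξ < (μs ξ).ord)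
    (hinc : ∀ α β : Ordinal, α < β → β < (Order.succ μ).ord →
      ∃ ζ < κ.ord, ∀ ξ, ζ ≤ ξ → ξ < κ.ord → f α ξ < f β ξ)
    (hcofinal : ∀ g : Ordinal → Ordinal, (∀ ξ < κ.ord, g ξ < (μs ξ).ord) →
      ∃ α < (Order.succ μ).ord, ∃ ζ < κ.ord, ∀ ξ, ζ ≤ ξ → ξ < κ.ord → g ξ < f α ξ) :
    IIWinsCubGame {c : Cardinal | c.IsRegular ∧ c.ord < (Order.succ μ).ord ∧ c ≠ κ}
      eps (Order.succ μ).ord {α | GoodPt f κ.ord α} :=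
  stmt3_general μ κ μs f eps hinf hκ hreg hμs heps0 hepsμ hf hinc hcofinal
end

section
/- Let κ < λ be regular cardinals and suppose E ⊆ λ ∩ Cof(κ) is a nonreflecting stationary subset of λ (i.e., E ∩ α is nonstationary in α for every α < λ). Then there is a family ⟨a_δ : δ ∈ E⟩, where each a_δ : κ → δ enumerates an increasing cofinal sequence in δ, which is almost free but not free in the transversal sense: every subfamily indexed by a proper initial segment of E admits a system ⟨b_δ⟩ of restrictions of the a_δ to co-bounded subsets of κ with pairwise disjoint ranges, but no such system exists for the whole family. -/
/-!
Each `δ ∈ E` gets an increasing cofinal `κ`-sequence `a δ`. Almost freeness is proved by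
induction on `γ`. At a successor `β + 1` with `β ∈ E`, every earlier `a δ` has range below `δ`,
which `a β` passes after fewer than `κ` steps, so by regularity of `κ` the two sequences collide
only on a bounded set of indices, and `a δ` can be cut down to avoid `a β`. At a limit `γ`,
nonreflection gives a club `C ⊆ γ` missing `E`; each `δ ∈ E ∩ γ` lies strictly between its last
club point `c δ` below it and the next club point, the transversal below that next point is
available by induction, and cutting `a δ` to values above `c δ` makes different blocks disjoint.
If all of `E` had a transversal, picking one point from each restriction would give an injective
regressive function on the stationary set `E`, which the closure points of its inverse rule out.
-/

open Cardinal Set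

/-- `S` is stationary in the (limit) ordinal `o`. -/
def IsStationaryIn (S : Set Ordinal) (o : Ordinal) : Prop :=
  Order.IsSuccLimit o ∧ ∀ C : Set Ordinal, IsClubIn C o → (S ∩ C).Nonempty

/-- There is a system assigning to each `δ ∈ s` a restriction `b_δ` of `a δ` to a
co-bounded subset of `κo` such that the ranges are pairwise disjoint (a transversal
in the NRT sense). -/
def CobddDisjointSystem (κo : Ordinal) (a : Ordinal → Ordinal → Ordinal)
    (s : Set Ordinal) : Prop :=
  ∃ D : Ordinal → Set Ordinal,
    (∀ δ ∈ s, D δ ⊆ Set.Iio κo ∧ ∃ ζ < κo, ∀ ξ, ζ ≤ ξ → ξ < κo → ξ ∈ D δ) ∧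
    (∀ δ ∈ s, ∀ δ' ∈ s, δ ≠ δ' → ∀ ξ ∈ D δ, ∀ ξ' ∈ D δ', a δ ξ ≠ a δ' ξ')

theorem Cardinal.IsRegular.iSup_Iio_lt_ord {κ : Cardinal} (hκ : κ.IsRegular) {ζ : Ordinal}
    (hζ : ζ < κ.ord) {f : Ordinal → Ordinal} (hf : ∀ η < ζ, f η < κ.ord) :
    ⨆ η : Iio ζ, f η < κ.ord := by
  refine Ordinal.lift_iSup_lt_of_lt_cof (f := fun η : Iio ζ => f η) ?_ fun η => hf η η.2
  rw [mk_Iio_ordinal, ← Ordinal.lift_cof, hκ.cof_ord, Cardinal.lift_lift, Cardinal.lift_lt]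
  exact Cardinal.lt_ord.1 hζ

def HoldsOnTail (κo : Ordinal) (P : Ordinal → Prop) : Prop :=
  ∃ ζ < κo, ∀ ξ, ζ ≤ ξ → ξ < κo → P ξ

namespace HoldsOnTail

variable {κo : Ordinal} {P Q : Ordinal → Prop}

theorem and (hP : HoldsOnTail κo P) (hQ : HoldsOnTail κo Q) :
    HoldsOnTail κo fun ξ => P ξ ∧ Q ξ := by
  obtain ⟨ζ, hζ, hP⟩ := hP
  obtain ⟨ζ', hζ', hQ⟩ := hQ
  exact ⟨max ζ ζ', max_lt hζ hζ', fun ξ hle hξ =>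
    ⟨hP ξ ((le_max_left _ _).trans hle) hξ, hQ ξ ((le_max_right _ _).trans hle) hξ⟩⟩

theorem mono (h : HoldsOnTail κo P) (hPQ : ∀ ξ < κo, P ξ → Q ξ) : HoldsOnTail κo Q := by
  obtain ⟨ζ, hζ, hP⟩ := h
  exact ⟨ζ, hζ, fun ξ hle hξ => hPQ ξ hξ (hP ξ hle hξ)⟩

end HoldsOnTail

theorem holdsOnTail_forall_ne_of_injOn {κ : Cardinal} (hκ : κ.IsRegular)
    {f : Ordinal → Ordinal} (hf : InjOn f (Iio κ.ord)) (g : Ordinal → Ordinal) {ζ : Ordinal}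
    (hζ : ζ < κ.ord) : HoldsOnTail κ.ord fun ξ => ∀ η < ζ, f ξ ≠ g η := by
  classical
  -- `idx η` is the only index at which `f` can take the value `g η`; there are `< κ` of them.
  let idx : Ordinal → Ordinal := fun η => if h : ∃ ξ < κ.ord, f ξ = g η then h.choose else 0
  have idx_lt : ∀ η, idx η < κ.ord := fun η => by
    by_cases h : ∃ ξ < κ.ord, f ξ = g η
    · simpa only [idx, dif_pos h] using h.choose_spec.1
    · simpa only [idx, dif_neg h] using hκ.ord_pos
  refine ⟨Order.succ (⨆ η : Iio ζ, idx η),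
    (isSuccLimit_ord hκ.aleph0_le).succ_lt (hκ.iSup_Iio_lt_ord hζ fun η _ => idx_lt η),
    fun ξ hle hξ η hη heq => hle.not_gt (Order.lt_succ_iff.2 ?_)⟩
  have hex : ∃ ξ < κ.ord, f ξ = g η := ⟨ξ, hξ, heq⟩
  have hidx : idx η = ξ := by
    simp only [idx, dif_pos hex]
    exact hf hex.choose_spec.1 hξ (hex.choose_spec.2.trans heq.symm)
  exact hidx ▸ Ordinal.le_iSup (fun η : Iio ζ => idx η) ⟨η, hη⟩

structure IsCofinalEnum (κo δ : Ordinal) (f : Ordinal → Ordinal) : Prop where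
  strictMonoOn : StrictMonoOn f (Iio κo)
  map_lt : ∀ ξ < κo, f ξ < δ
  exists_lt_map : ∀ b < δ, ∃ ξ < κo, b < f ξ

theorem exists_isCofinalEnum {κ : Cardinal} (hκ : ℵ₀ ≤ κ) {δ : Ordinal} (hδ : δ.cof = κ) :
    ∃ f, IsCofinalEnum κ.ord δ f := by
  obtain ⟨f, hf⟩ := Ordinal.exists_isFundamentalSeq (congrArg ord hδ)
  have hlim : Order.IsSuccLimit κ.ord := isSuccLimit_ord hκ
  refine ⟨fun ξ => if h : ξ < κ.ord then f ⟨ξ, h⟩ else 0, ?_, ?_, ?_⟩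
  · intro ξ hξ η hη hξη
    simp only [dif_pos (show ξ < κ.ord from hξ), dif_pos (show η < κ.ord from hη)]
    exact hf.strictMono (Subtype.mk_lt_mk.2 hξη)
  · intro ξ hξ
    simp only [dif_pos hξ]
    exact (f ⟨ξ, hξ⟩).2
  · intro b hb
    obtain ⟨_, ⟨ξ, rfl⟩, hbξ⟩ := hf.isCofinal_range ⟨b, hb⟩
    have hsucc : Order.succ ξ.1 < κ.ord := hlim.succ_lt ξ.2
    refine ⟨Order.succ ξ.1, hsucc, ?_⟩
    simp only [dif_pos hsucc]
    exact (Subtype.mk_le_mk.1 hbξ).trans_lt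
      (hf.strictMono (Subtype.mk_lt_mk.2 (Order.lt_succ ξ.1) : ξ < ⟨_, hsucc⟩))

namespace IsCofinalEnum

variable {κo δ : Ordinal} {f : Ordinal → Ordinal}

theorem ne_zero (hf : IsCofinalEnum κo δ f) (hκo : 0 < κo) : δ ≠ 0 :=
  (zero_le.trans_lt (hf.map_lt 0 hκo)).ne'

theorem holdsOnTail_lt_map (hf : IsCofinalEnum κo δ f) {b : Ordinal} (hb : b < δ) :
    HoldsOnTail κo fun ξ => b < f ξ := by
  obtain ⟨ζ, hζ, hbζ⟩ := hf.exists_lt_map b hb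
  exact ⟨ζ, hζ, fun ξ hle hξ => hbζ.trans_le (hf.strictMonoOn.monotoneOn hζ hξ hle)⟩

theorem holdsOnTail_forall_ne {κ : Cardinal} (hκ : κ.IsRegular) {β : Ordinal}
    {g : Ordinal → Ordinal} (hf : IsCofinalEnum κ.ord δ f) (hg : IsCofinalEnum κ.ord β g)
    (hδβ : δ < β) : HoldsOnTail κ.ord fun ξ => ∀ η < κ.ord, f ξ ≠ g η := by
  obtain ⟨ζ, hζ, hδg⟩ := hg.holdsOnTail_lt_map hδβ
  refine (holdsOnTail_forall_ne_of_injOn hκ hf.strictMonoOn.injOn g hζ).mono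
    fun ξ hξ hne η hη => ?_
  rcases lt_or_ge η ζ with h | h
  · exact hne η h
  · exact ((hf.map_lt ξ hξ).trans (hδg η h hη)).ne

end IsCofinalEnum

theorem le_of_sSup_inter_Iio_lt {C : Set Ordinal} {δ c : Ordinal} (hc : c ∈ C)
    (h : sSup (C ∩ Iio δ) < c) : δ ≤ c :=
  not_lt.1 fun hcδ => h.not_ge (le_csSup (bddAbove_Iio.mono inter_subset_right) ⟨hc, hcδ⟩)

theorem le_sSup_inter_Iio_of_lt {C : Set Ordinal} {δ δ' : Ordinal}
    (h : sSup (C ∩ Iio δ) < sSup (C ∩ Iio δ')) : δ ≤ sSup (C ∩ Iio δ') := by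
  obtain ⟨c, hc, hlt⟩ := exists_lt_of_lt_csSup' h
  exact (le_of_sSup_inter_Iio_lt hc.1 hlt).trans
    (le_csSup (bddAbove_Iio.mono inter_subset_right) hc)

theorem IsClubIn.sSup_inter_Iio_lt {C : Set Ordinal} {γ δ : Ordinal} (hC : IsClubIn C γ)
    (hδγ : δ < γ) (hδ0 : δ ≠ 0) (hδC : δ ∉ C) : sSup (C ∩ Iio δ) < δ := by
  refine (csSup_le' fun x hx => hx.2.le).lt_of_ne fun heq => hδC (hC.2.2 δ hδγ hδ0 fun d hd => ?_)
  obtain ⟨c, hc, hdc⟩ := exists_lt_of_lt_csSup' (heq ▸ hd)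
  exact ⟨c, hc.1, hdc, hc.2⟩

theorem isClubIn_closurePoints {lam : Cardinal} (hlam : lam.IsRegular) (hlam0 : ℵ₀ < lam)
    {g : Ordinal → Ordinal} (hg : ∀ β < lam.ord, g β < lam.ord) :
    IsClubIn {α | α < lam.ord ∧ α ≠ 0 ∧ ∀ β < α, g β < α} lam.ord := by
  let F : Ordinal → Ordinal := fun x => Order.succ (⨆ β : Iio x, g β)
  have hlim := isSuccLimit_ord hlam.aleph0_le
  have hF : ∀ x < lam.ord, F x < lam.ord := fun x hx =>
    hlim.succ_lt (hlam.iSup_Iio_lt_ord hx fun β hβ => hg β (hβ.trans hx))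
  refine ⟨fun α hα => hα.1, fun b hb => ?_, fun b hb hb0 happ => ⟨hb, hb0, fun β hβ => ?_⟩⟩
  · have hb_lt : b < Ordinal.nfp F (Order.succ b) :=
      (Order.lt_succ b).trans_le (Ordinal.le_nfp F _)
    refine ⟨Ordinal.nfp F (Order.succ b), ⟨?_, ?_, fun β hβ => ?_⟩, hb_lt⟩
    · exact nfp_lt_ord_of_isRegular hlam hlam0.ne' hF (hlim.succ_lt hb)
    · exact (zero_le.trans_lt hb_lt).ne'
    · obtain ⟨n, hn⟩ := Ordinal.lt_nfp_iff.1 hβ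
      calc g β ≤ ⨆ η : Iio (F^[n] (Order.succ b)), g η :=
            Ordinal.le_iSup (fun η : Iio _ => g η) ⟨β, hn⟩
        _ < F^[n + 1] (Order.succ b) := by
            rw [Function.iterate_succ_apply']
            exact Order.lt_succ _
        _ ≤ Ordinal.nfp F (Order.succ b) := Ordinal.iterate_le_nfp F _ (n + 1)
  · obtain ⟨x, hx, hβx, hxb⟩ := happ β hβ
    exact (hx.2.2 β hβx).trans hxb

theorem IsStationaryIn.not_injOn_of_regressive {lam : Cardinal} (hlam : lam.IsRegular)
    (hlam0 : ℵ₀ < lam) {S : Set Ordinal} (hS : IsStationaryIn S lam.ord)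
    (hSlt : S ⊆ Iio lam.ord) {f : Ordinal → Ordinal} (hf : ∀ δ ∈ S, f δ < δ) :
    ¬ InjOn f S := by
  classical
  intro hinj
  -- `g` inverts `f` on `S`; a closure point `α ∈ S` of `g` would satisfy `α = g (f α) < α`.
  let g : Ordinal → Ordinal := fun β => if h : ∃ δ ∈ S, f δ = β then h.choose else 0
  have hg : ∀ δ ∈ S, g (f δ) = δ := fun δ hδ => by
    have h : ∃ δ' ∈ S, f δ' = f δ := ⟨δ, hδ, rfl⟩
    simp only [g, dif_pos h]
    exact hinj h.choose_spec.1 hδ h.choose_spec.2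
  have hg_lt : ∀ β, g β < lam.ord := fun β => by
    by_cases h : ∃ δ ∈ S, f δ = β
    · simp only [g, dif_pos h]
      exact hSlt h.choose_spec.1
    · simpa only [g, dif_neg h] using hlam.ord_pos
  obtain ⟨α, hαS, -, -, hα⟩ := hS.2 _ (isClubIn_closurePoints hlam hlam0 fun β _ => hg_lt β)
  exact (hα _ (hf α hαS)).ne (hg α hαS)

namespace CobddDisjointSystem

variable {κo : Ordinal} {a : Ordinal → Ordinal → Ordinal} {s t : Set Ordinal}

theorem mono (h : CobddDisjointSystem κo a t) (hst : s ⊆ t) : CobddDisjointSystem κo a s := by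
  obtain ⟨D, hD, hdisj⟩ := h
  exact ⟨D, fun δ hδ => hD δ (hst hδ), fun δ hδ δ' hδ' => hdisj δ (hst hδ) δ' (hst hδ')⟩

theorem of_subsingleton (hκo : 0 < κo) (hs : s.Subsingleton) : CobddDisjointSystem κo a s :=
  ⟨fun _ => Iio κo, fun _ _ => ⟨subset_rfl, 0, hκo, fun _ _ hξ => hξ⟩,
    fun _ hδ _ hδ' hne => (hne (hs hδ hδ')).elim⟩

theorem insert (hκo : 0 < κo) (hs : CobddDisjointSystem κo a s) {β : Ordinal}
    (hβ : ∀ δ ∈ s, HoldsOnTail κo fun ξ => ∀ η < κo, a δ ξ ≠ a β η) :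
    CobddDisjointSystem κo a (insert β s) := by
  classical
  obtain ⟨D, hD, hdisj⟩ := hs
  refine ⟨fun δ => if δ = β then Iio κo else D δ ∩ {ξ | ∀ η < κo, a δ ξ ≠ a β η},
    fun δ hδ => ?_, fun δ hδ δ' hδ' hne ξ hξ ξ' hξ' => ?_⟩
  · by_cases hδβ : δ = β
    · simp only [if_pos hδβ]
      exact ⟨subset_rfl, 0, hκo, fun _ _ hξ => hξ⟩
    · have hδs := mem_of_mem_insert_of_ne hδ hδβ
      simp only [if_neg hδβ]
      exact ⟨inter_subset_left.trans (hD δ hδs).1, HoldsOnTail.and (hD δ hδs).2 (hβ δ hδs)⟩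
  · by_cases hδβ : δ = β <;> by_cases hδ'β : δ' = β
    · exact (hne (hδβ.trans hδ'β.symm)).elim
    · subst hδβ
      simp only [if_neg hδ'β] at hξ hξ'
      exact (hξ'.2 ξ hξ).symm
    · subst hδ'β
      simp only [if_neg hδβ] at hξ hξ'
      exact hξ.2 ξ' hξ'
    · simp only [if_neg hδβ, if_neg hδ'β] at hξ hξ'
      exact hdisj δ (mem_of_mem_insert_of_ne hδ hδβ) δ' (mem_of_mem_insert_of_ne hδ' hδ'β)
        hne ξ hξ.1 ξ' hξ'.1

/-- Members of different fibers of `c` are separated: above `c δ`, the range of `a δ` lies in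
`(c δ, δ)`, and `hblock` makes these intervals disjoint for distinct values of `c`. -/
theorem of_fibers (hs : ∀ δ ∈ s, IsCofinalEnum κo δ (a δ)) {c : Ordinal → Ordinal}
    (hc : ∀ δ ∈ s, c δ < δ) (hblock : ∀ δ ∈ s, ∀ δ' ∈ s, c δ < c δ' → δ ≤ c δ')
    (hfib : ∀ x, CobddDisjointSystem κo a {δ ∈ s | c δ = x}) : CobddDisjointSystem κo a s := by
  choose D hD hdisj using hfib
  have hDlt : ∀ δ ∈ s, D (c δ) δ ⊆ Iio κo := fun δ hδ => (hD (c δ) δ ⟨hδ, rfl⟩).1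
  refine ⟨fun δ => D (c δ) δ ∩ {ξ | c δ < a δ ξ}, fun δ hδ => ?_,
    fun δ hδ δ' hδ' hne ξ hξ ξ' hξ' => ?_⟩
  · exact ⟨inter_subset_left.trans (hDlt δ hδ),
      HoldsOnTail.and (hD (c δ) δ ⟨hδ, rfl⟩).2 ((hs δ hδ).holdsOnTail_lt_map (hc δ hδ))⟩
  · rcases lt_trichotomy (c δ) (c δ') with h | h | h
    · exact ((hs δ hδ).map_lt ξ (hDlt δ hδ hξ.1)).trans_le
        ((hblock δ hδ δ' hδ' h).trans hξ'.2.le) |>.ne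
    · exact hdisj (c δ) δ ⟨hδ, rfl⟩ δ' ⟨hδ', h.symm⟩ hne ξ hξ.1 ξ' (h ▸ hξ'.1)
    · exact ((hs δ' hδ').map_lt ξ' (hDlt δ' hδ' hξ'.1)).trans_le
        ((hblock δ' hδ' δ hδ h).trans hξ.2.le) |>.ne'

theorem of_isClubIn (hκo : 0 < κo) (hs : ∀ δ ∈ s, IsCofinalEnum κo δ (a δ)) {C : Set Ordinal}
    {γ : Ordinal} (hC : IsClubIn C γ) (hsC : Disjoint s C) (hsγ : s ⊆ Iio γ)
    (IH : ∀ c < γ, CobddDisjointSystem κo a (s ∩ Iio c)) : CobddDisjointSystem κo a s := by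
  have hδC : ∀ δ ∈ s, δ ∉ C := fun δ hδ => hsC.notMem_of_mem_left hδ
  have hc : ∀ δ ∈ s, sSup (C ∩ Iio δ) < δ := fun δ hδ =>
    hC.sSup_inter_Iio_lt (hsγ hδ) ((hs δ hδ).ne_zero hκo) (hδC δ hδ)
  refine of_fibers hs hc (fun δ _ δ' _ => le_sSup_inter_Iio_of_lt) fun x => ?_
  by_cases hx : x < γ
  · obtain ⟨c, hcC, hxc⟩ := hC.2.1 x hx
    refine (IH c (hC.1 hcC)).mono ?_
    rintro δ ⟨hδ, hδx⟩
    exact ⟨hδ, (le_of_sSup_inter_Iio_lt hcC (hδx ▸ hxc)).lt_of_ne fun h => hδC δ hδ (h ▸ hcC)⟩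
  · exact of_subsingleton hκo fun δ hδ _ _ => (hx (hδ.2 ▸ (hc δ hδ.1).trans (hsγ hδ.1))).elim

theorem exists_injOn (h : CobddDisjointSystem κo a s) :
    ∃ z : Ordinal → Ordinal, (∀ δ ∈ s, z δ < κo) ∧ InjOn (fun δ => a δ (z δ)) s := by
  obtain ⟨D, hD, hdisj⟩ := h
  choose! z hz htail using fun δ hδ => (hD δ hδ).2
  refine ⟨z, hz, fun δ hδ δ' hδ' heq => by_contra fun hne => ?_⟩
  exact hdisj δ hδ δ' hδ' hne _ (htail δ hδ _ le_rfl (hz δ hδ)) _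
    (htail δ' hδ' _ le_rfl (hz δ' hδ')) heq

end CobddDisjointSystem

theorem cobddDisjointSystem_inter_Iio {κ : Cardinal} (hκ : κ.IsRegular)
    {a : Ordinal → Ordinal → Ordinal} {E : Set Ordinal}
    (hE : ∀ δ ∈ E, IsCofinalEnum κ.ord δ (a δ)) {o : Ordinal}
    (hnonrefl : ∀ α < o, ¬ IsStationaryIn (E ∩ Iio α) α) :
    ∀ γ < o, CobddDisjointSystem κ.ord a (E ∩ Iio γ) := by
  have hκo := hκ.ord_pos
  intro γ
  induction γ using WellFoundedLT.induction with | _ γ IH => ?_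
  intro hγ
  rcases Ordinal.zero_or_succ_or_isSuccLimit γ with rfl | ⟨β, rfl⟩ | hlim
  · exact .of_subsingleton hκo (by simp)
  · have hβ := IH β (Order.lt_succ β) ((Order.lt_succ β).trans hγ)
    rw [Order.Iio_succ]
    by_cases hβE : β ∈ E
    · refine (hβ.insert hκo fun δ hδ =>
        (hE δ hδ.1).holdsOnTail_forall_ne hκ (hE β hβE) hδ.2).mono ?_
      rintro δ ⟨hδ, hδβ⟩
      rcases (mem_Iic.1 hδβ).eq_or_lt with rfl | h
      exacts [mem_insert δ _, mem_insert_of_mem β ⟨hδ, h⟩]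
    · refine hβ.mono ?_
      rintro δ ⟨hδ, hδβ⟩
      exact ⟨hδ, (mem_Iic.1 hδβ).lt_of_ne fun h => hβE (h ▸ hδ)⟩
  · obtain ⟨C, hC, hdisj⟩ : ∃ C, IsClubIn C γ ∧ Disjoint (E ∩ Iio γ) C := by
      by_contra! h
      exact hnonrefl γ hγ ⟨hlim, fun C hC => not_disjoint_iff_nonempty_inter.1 (h C hC)⟩
    exact .of_isClubIn hκo (fun δ hδ => hE δ hδ.1) hC hdisj (fun δ hδ => hδ.2) fun c hc =>
      (IH c hc (hc.trans hγ)).mono (inter_subset_inter_left _ inter_subset_left)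

/-- If `κ < λ` are regular and `E ⊆ λ ∩ Cof(κ)` is a nonreflecting stationary set,
then there is a family `⟨a_δ : δ ∈ E⟩` of increasing cofinal enumerations `a_δ : κ → δ`
which is almost free (every subfamily indexed by a proper initial segment of `E` has
a transversal of co-bounded restrictions with pairwise disjoint ranges) but has no
such transversal on all of `E`. -/
theorem stmt11 (κ lam : Cardinal) (hκ : κ.IsRegular) (hlam : lam.IsRegular)
    (hlt : κ < lam) (E : Set Ordinal)
    (hE : E ⊆ {α : Ordinal | α < lam.ord ∧ α.cof = κ})
    (hstat : IsStationaryIn E lam.ord)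
    (hnonrefl : ∀ α < lam.ord, ¬ IsStationaryIn (E ∩ Set.Iio α) α) :
    ∃ a : Ordinal → Ordinal → Ordinal,
      (∀ δ ∈ E,
        (∀ ξ η : Ordinal, ξ < η → η < κ.ord → a δ ξ < a δ η) ∧
        (∀ ξ < κ.ord, a δ ξ < δ) ∧
        (∀ b < δ, ∃ ξ < κ.ord, b < a δ ξ)) ∧
      (∀ γ < lam.ord, CobddDisjointSystem κ.ord a (E ∩ Set.Iio γ)) ∧
      ¬ CobddDisjointSystem κ.ord a E := by
  have hexists : ∀ δ ∈ E, ∃ f, IsCofinalEnum κ.ord δ f := fun δ hδ =>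
    exists_isCofinalEnum hκ.aleph0_le (hE hδ).2
  choose! a ha using hexists
  refine ⟨a, fun δ hδ => ⟨fun ξ η hξη hη => (ha δ hδ).strictMonoOn (hξη.trans hη) hη hξη,
    (ha δ hδ).map_lt, (ha δ hδ).exists_lt_map⟩, cobddDisjointSystem_inter_Iio hκ ha hnonrefl,
    fun hfree => ?_⟩
  obtain ⟨z, hz, hinj⟩ := hfree.exists_injOn
  exact hstat.not_injOn_of_regressive hlam (hκ.aleph0_le.trans_lt hlt) (fun δ hδ => (hE hδ).1)
    (fun δ hδ => (ha δ hδ).map_lt _ (hz δ hδ)) hinj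
end

section
/- Assume j : V → M is an elementary embedding with critical point χ such that κ < χ < μ, j(χ) ≥ λ = μ⁺, and M is closed under λ-sequences, where μ is singular of cofinality κ. Let ⟨f_α : α < λ⟩ be a scale for μ. Then the set of ordinals α < λ that are not good points of the scale and have cofinality > κ is stationary in λ. -/
open Cardinal Set

/-- `P_χ(λ)`: the subsets of `λ` of cardinality `< χ`. -/
def Pchi (χ : Cardinal.{0}) (lamo : Ordinal.{0}) : Set (Set Ordinal.{0}) :=
  {s | #s < Cardinal.lift.{1} χ ∧ s ⊆ Set.Iio lamo}

/-- The standard combinatorial rendering of "there is an elementary embedding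
`j : V → M` with critical point `χ`, `j(χ) ≥ λ` and `M` closed under `λ`-sequences":
a `χ`-complete normal fine ultrafilter on `P_χ(λ)`. -/
def IsSupercompactWitness (χ : Cardinal.{0}) (lamo : Ordinal.{0})
    (U : Set (Set (Set Ordinal.{0}))) : Prop :=
  (∀ A ∈ U, A ⊆ Pchi χ lamo) ∧
  Pchi χ lamo ∈ U ∧
  (∅ : Set (Set Ordinal)) ∉ U ∧
  (∀ A ∈ U, ∀ B : Set (Set Ordinal), A ⊆ B → B ⊆ Pchi χ lamo → B ∈ U) ∧
  -- χ-complete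
  (∀ F : Set (Set (Set Ordinal)), F.Nonempty → #F < Cardinal.lift.{1} χ →
    F ⊆ U → ⋂₀ F ∈ U) ∧
  -- ultra
  (∀ A : Set (Set Ordinal), A ⊆ Pchi χ lamo → (A ∈ U ∨ Pchi χ lamo \ A ∈ U)) ∧
  -- fine
  (∀ a < lamo, {s ∈ Pchi χ lamo | a ∈ s} ∈ U) ∧
  -- normal
  (∀ A : Ordinal → Set (Set Ordinal), (∀ a < lamo, A a ∈ U) →
    {s ∈ Pchi χ lamo | ∀ a ∈ s, s ∈ A a} ∈ U)

/-!
Let `𝒰` be the ultrafilter on `Set Ordinal` given by the supercompactness measure on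
`P_χ(λ)`. For `𝒰`-almost every `s`, `sup s` lies in any prescribed club of `λ` and has
cofinality `> κ`. So if the set in question were not stationary, almost every `sup s` would
be a good point, and by `χ`-completeness with a witness `A s` along which the scale increases
from one fixed `ζ₀` on. Normality then bounds the values `f a ξ`, `a ∈ A s`, almost surely by a
constant `γ ξ < μ_ξ` for all large `ξ`: otherwise every `γ < μ_ξ` would already be reached
by elements of `A s` below a fixed `β < λ`, and the scale is increasing along `A s` past `β`
into a fixed `f N`. A scale function above `ξ ↦ γ ξ` then contradicts the fact that `A s`
reaches beyond any fixed `α < λ`.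
-/

open Filter

theorem Ordinal.exists_cofinal_of_cof_le {o : Ordinal.{u}} (ho : 0 < o) {κ : Cardinal.{u}}
    (h : o.cof ≤ κ) :
    ∃ e : Ordinal.{u} → Ordinal.{u}, (∀ i < κ.ord, e i < o) ∧ ∀ b < o, ∃ i < κ.ord, b ≤ e i := by
  obtain ⟨g, hg⟩ := Ordinal.exists_isFundamentalSeq (o := o) rfl
  refine ⟨fun i => if hi : i < o.cof.ord then g ⟨i, hi⟩ else 0, fun i _ => ?_, fun b hb => ?_⟩
  · dsimp only
    split_ifs
    exacts [(g _).2, ho]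
  · obtain ⟨_, ⟨j, rfl⟩, hj⟩ := hg.isCofinal_range ⟨b, hb⟩
    refine ⟨j, j.2.trans_le (Cardinal.ord_le_ord.2 h), ?_⟩
    dsimp only
    rw [dif_pos (mem_Iio.1 j.2)]
    exact hj

theorem Cardinal.IsRegular.iSup_Iio_lt_ord_s14 {c : Cardinal.{u}} (hc : c.IsRegular) {θ : Ordinal.{u}}
    (hθ : θ.card < c) {b : Ordinal.{u} → Ordinal.{u}} (hb : ∀ i < θ, b i < c.ord) :
    ⨆ i : Iio θ, b i < c.ord := by
  refine Ordinal.lift_iSup_lt_of_lt_cof ?_ fun i => hb i i.2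
  rwa [Cardinal.mk_Iio_ordinal, Cardinal.lift_lift, ← Ordinal.lift_cof, hc.cof_ord,
    Cardinal.lift_lt]

theorem Ordinal.le_iSup_Iio {θ : Ordinal.{u}} (b : Ordinal.{u} → Ordinal.{u}) {i : Ordinal.{u}}
    (hi : i < θ) : b i ≤ ⨆ j : Iio θ, b j :=
  Ordinal.le_iSup (fun j : Iio θ => b j) ⟨i, hi⟩

structure IsSupercompactMeasure (𝒰 : Ultrafilter (Set Ordinal.{0})) (χ : Cardinal.{0})
    (lamo : Ordinal.{0}) : Prop where
  eventually_mem_pchi : ∀ᶠ s : Set Ordinal in 𝒰, s ∈ Pchi χ lamo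
  eventually_mem : ∀ a < lamo, ∀ᶠ s : Set Ordinal in 𝒰, a ∈ s
  eventually_forall_mem (P : Ordinal → Set Ordinal → Prop) :
    (∀ a < lamo, ∀ᶠ s : Set Ordinal in 𝒰, P a s) → ∀ᶠ s : Set Ordinal in 𝒰, ∀ a ∈ s, P a s
  eventually_forall_lt (θ : Ordinal) (hθ : θ.card < χ) (P : Ordinal → Set Ordinal → Prop) :
    (∀ i < θ, ∀ᶠ s : Set Ordinal in 𝒰, P i s) → ∀ᶠ s : Set Ordinal in 𝒰, ∀ i < θ, P i s

namespace IsSupercompactWitness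

variable {χ : Cardinal.{0}} {lamo : Ordinal.{0}} {U : Set (Set (Set Ordinal.{0}))}

theorem inter_mem (hU : IsSupercompactWitness χ lamo U) (hχ : ℵ₀ ≤ χ)
    {A B : Set (Set Ordinal)} (hA : A ∈ U) (hB : B ∈ U) : A ∩ B ∈ U := by
  have hcard : #({A, B} : Set (Set (Set Ordinal))) < Cardinal.lift.{1} χ :=
    (Set.toFinite _).lt_aleph0.trans_le (Cardinal.aleph0_le_lift.2 hχ)
  simpa using hU.2.2.2.2.1 {A, B} (insert_nonempty _ _) hcard (insert_subset hA
    (singleton_subset_iff.2 hB))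

theorem exists_isSupercompactMeasure (hU : IsSupercompactWitness χ lamo U) (hχ : ℵ₀ ≤ χ) :
    ∃ 𝒰 : Ultrafilter (Set Ordinal.{0}), IsSupercompactMeasure 𝒰 χ lamo := by
  have ⟨hsub, hPchi, hempty, hup, hcomplete, hultra, hfine, hnormal⟩ := hU
  let F : Filter (Set Ordinal) :=
    { sets := {A | ∃ B ∈ U, B ⊆ A}
      univ_sets := ⟨_, hPchi, subset_univ _⟩
      sets_of_superset := fun ⟨B, hB, hBA⟩ hAC => ⟨B, hB, hBA.trans hAC⟩
      inter_sets := fun ⟨B, hB, hBA⟩ ⟨B', hB', hBA'⟩ =>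
        ⟨B ∩ B', hU.inter_mem hχ hB hB', inter_subset_inter hBA hBA'⟩ }
  have hFU : ∀ {A}, A ∈ F → Pchi χ lamo ∩ A ∈ U := fun ⟨B, hB, hBA⟩ =>
    hup B hB _ (subset_inter (hsub B hB) hBA) inter_subset_left
  refine ⟨.ofComplNotMemIff F fun A => ⟨fun hAc => ?_, fun hA hAc => ?_⟩, ?_, ?_, ?_, ?_⟩
  · refine ⟨_, (hultra _ inter_subset_left).resolve_right fun h => hAc ?_,
      inter_subset_right⟩
    exact ⟨_, h, fun s hs hsA => hs.2 ⟨hs.1, hsA⟩⟩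
  · obtain ⟨B, hB, hBe⟩ := F.inter_sets hA hAc
    rw [inter_compl_self, subset_empty_iff] at hBe
    exact hempty (hBe ▸ hB)
  · exact ⟨_, hPchi, subset_rfl⟩
  · exact fun a ha => ⟨_, hfine a ha, fun s hs => hs.2⟩
  · intro P hP
    exact ⟨_, hnormal (fun a => Pchi χ lamo ∩ {s | P a s}) fun a ha => hFU (hP a ha),
      fun s hs a ha => (hs.2 a ha).2⟩
  · intro θ hθ P hP
    rcases eq_or_ne θ 0 with rfl | hθ0
    · exact Eventually.of_forall fun s i hi => absurd hi not_lt_zero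
    let A : Ordinal → Set (Set Ordinal) := fun i => Pchi χ lamo ∩ {s | P i s}
    have hcard : #(A '' Iio θ) < Cardinal.lift.{1} χ := by
      refine Cardinal.mk_image_le.trans_lt ?_
      rwa [Cardinal.mk_Iio_ordinal, Cardinal.lift_lt]
    have h0 : (0 : Ordinal) ∈ Iio θ := pos_iff_ne_zero.2 hθ0
    refine ⟨_, hcomplete (A '' Iio θ) ⟨_, mem_image_of_mem A h0⟩ hcard ?_,
      fun s hs i hi => (hs _ (mem_image_of_mem A (show i ∈ Iio θ from hi))).2⟩
    rintro _ ⟨i, hi, rfl⟩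
    exact hFU (hP i hi)

end IsSupercompactWitness

namespace IsSupercompactMeasure

variable {𝒰 : Ultrafilter (Set Ordinal.{0})} {χ c : Cardinal.{0}} {lamo : Ordinal.{0}}

theorem eventually_bddAbove (h𝒰 : IsSupercompactMeasure 𝒰 χ lamo) :
    ∀ᶠ s : Set Ordinal in 𝒰, BddAbove s :=
  h𝒰.eventually_mem_pchi.mono fun _ hs => ⟨lamo, fun _ ha => (hs.2 ha).le⟩

theorem exists_eventually_of_exists_lt (h𝒰 : IsSupercompactMeasure 𝒰 χ lamo) {θ : Ordinal}
    (hθ : θ.card < χ) {P : Set Ordinal → Ordinal → Prop}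
    (h : ∀ᶠ s in 𝒰, ∃ z < θ, P s z) : ∃ z < θ, ∀ᶠ s in 𝒰, P s z := by
  by_contra! hne
  have hnot := h𝒰.eventually_forall_lt θ hθ (fun z s => ¬ P s z) hne
  obtain ⟨s, ⟨z, hz, hP⟩, hnP⟩ := (h.and hnot).exists
  exact hnP z hz hP

theorem exists_eventually_of_exists_mem (h𝒰 : IsSupercompactMeasure 𝒰 χ lamo)
    {P : Set Ordinal → Ordinal → Prop} (h : ∀ᶠ s in 𝒰, ∃ a ∈ s, P s a) :
    ∃ a < lamo, ∀ᶠ s in 𝒰, P s a := by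
  by_contra! hne
  have hnot := h𝒰.eventually_forall_mem (fun a s => ¬ P s a) hne
  obtain ⟨s, ⟨a, ha, hP⟩, hnP⟩ := (h.and hnot).exists
  exact hnP a ha hP

theorem exists_eventually_of_exists_lt_sSup (h𝒰 : IsSupercompactMeasure 𝒰 χ lamo)
    {P : Set Ordinal → Ordinal → Prop} (h : ∀ᶠ s in 𝒰, ∃ a < sSup s, P s a) :
    ∃ b < lamo, ∀ᶠ s in 𝒰, ∃ a < b, P s a :=
  h𝒰.exists_eventually_of_exists_mem <| h.mono fun _ ⟨a, has, hP⟩ =>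
    let ⟨b, hb, hab⟩ := exists_lt_of_lt_csSup' has
    ⟨b, hb, a, hab, hP⟩

theorem eventually_lt_sSup (h𝒰 : IsSupercompactMeasure 𝒰 χ lamo)
    (hlim : Order.IsSuccLimit lamo) {a : Ordinal} (ha : a < lamo) :
    ∀ᶠ s in 𝒰, a < sSup s := by
  filter_upwards [h𝒰.eventually_mem _ (hlim.succ_lt ha), h𝒰.eventually_bddAbove] with s hs hbdd
  exact (Order.lt_succ a).trans_le (le_csSup hbdd hs)

theorem eventually_sSup_notMem (h𝒰 : IsSupercompactMeasure 𝒰 χ lamo)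
    (hlim : Order.IsSuccLimit lamo) : ∀ᶠ s : Set Ordinal in 𝒰, sSup s ∉ s := by
  filter_upwards [h𝒰.eventually_forall_mem (fun a s => Order.succ a ∈ s)
    fun a ha => h𝒰.eventually_mem _ (hlim.succ_lt ha), h𝒰.eventually_bddAbove] with s hs hbdd hmem
  exact (le_csSup hbdd (hs _ hmem)).not_gt (Order.lt_succ _)

theorem eventually_sSup_lt (h𝒰 : IsSupercompactMeasure 𝒰 χ c.ord) (hc : c.IsRegular)
    (hχc : χ ≤ c) : ∀ᶠ s in 𝒰, sSup s < c.ord := by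
  filter_upwards [h𝒰.eventually_mem_pchi] with s hs
  refine Ordinal.sSup_lt_of_lt_cof ?_ fun _ ha => hs.2 ha
  rw [← Ordinal.lift_cof, hc.cof_ord]
  exact hs.1.trans_le (Cardinal.lift_le.2 hχc)

theorem exists_forall_eventually_of_exists_lt_sSup (h𝒰 : IsSupercompactMeasure 𝒰 χ c.ord)
    (hc : c.IsRegular) {θ : Ordinal} (hθ : θ.card < c) {P : Ordinal → Set Ordinal → Ordinal → Prop}
    (h : ∀ i < θ, ∀ᶠ s in 𝒰, ∃ a < sSup s, P i s a) :
    ∃ b < c.ord, ∀ i < θ, ∀ᶠ s in 𝒰, ∃ a < b, P i s a := by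
  have hb : ∀ i, ∃ b < c.ord, i < θ → ∀ᶠ s in 𝒰, ∃ a < b, P i s a := fun i => by
    by_cases hi : i < θ
    · obtain ⟨b, hb, hP⟩ := h𝒰.exists_eventually_of_exists_lt_sSup (h i hi)
      exact ⟨b, hb, fun _ => hP⟩
    · exact ⟨0, (Cardinal.isSuccLimit_ord hc.aleph0_le).bot_lt, fun hi' => absurd hi' hi⟩
  choose b hb hP using hb
  refine ⟨_, hc.iSup_Iio_lt_ord_s14 hθ fun i _ => hb i, fun i hi => (hP i hi).mono ?_⟩
  exact fun s ⟨a, ha, hPa⟩ => ⟨a, ha.trans_le (Ordinal.le_iSup_Iio b hi), hPa⟩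

theorem eventually_lt_cof_sSup (h𝒰 : IsSupercompactMeasure 𝒰 χ c.ord) (hc : c.IsRegular)
    (hχc : χ ≤ c) {κ : Cardinal} (hκχ : κ < χ) : ∀ᶠ s : Set Ordinal in 𝒰, κ < (sSup s).cof := by
  have hlim := Cardinal.isSuccLimit_ord hc.aleph0_le
  have hκ : κ.ord.card < χ := by rwa [Cardinal.card_ord]
  -- Otherwise a cofinal `κ`-sequence in `sSup s` is almost surely bounded by one `b < c.ord`,
  -- while `b < sSup s` almost surely.
  by_contra hne
  have hcof : ∀ᶠ s : Set Ordinal in 𝒰, (sSup s).cof ≤ κ :=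
    (Ultrafilter.eventually_not.2 hne).mono fun _ => le_of_not_gt
  obtain ⟨e, he⟩ := ((hcof.and (h𝒰.eventually_lt_sSup hlim hlim.bot_lt)).mono
    fun s hs => Ordinal.exists_cofinal_of_cof_le hs.2 hs.1).choice
  obtain ⟨b, hb, hbound⟩ := h𝒰.exists_forall_eventually_of_exists_lt_sSup hc
    (hκ.trans_le hχc) (P := fun i s a => a = e s i) fun i hi =>
      he.mono fun s hs => ⟨_, hs.1 i hi, rfl⟩
  obtain ⟨s, ⟨-, hcofinal⟩, hbs, hbounded⟩ := (he.and ((h𝒰.eventually_lt_sSup hlim hb).and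
    (h𝒰.eventually_forall_lt _ hκ _ hbound))).exists
  obtain ⟨i, hi, hbi⟩ := hcofinal b hbs
  obtain ⟨a, ha, rfl⟩ := hbounded i hi
  exact hbi.not_gt ha

theorem eventually_sSup_mem (h𝒰 : IsSupercompactMeasure 𝒰 χ c.ord) (hc : c.IsRegular)
    (hχc : χ ≤ c) {C : Set Ordinal} (hC : IsClubIn C c.ord) : ∀ᶠ s in 𝒰, sSup s ∈ C := by
  have hlim := Cardinal.isSuccLimit_ord hc.aleph0_le
  have hCs : ∀ᶠ s : Set Ordinal in 𝒰, ∀ a ∈ s, ∃ x ∈ C, x ∈ s ∧ a < x :=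
    h𝒰.eventually_forall_mem (fun a s => ∃ x ∈ C, x ∈ s ∧ a < x) fun a ha => by
      obtain ⟨x, hxC, hax⟩ := hC.2.1 a ha
      exact (h𝒰.eventually_mem x (hC.1 hxC)).mono fun s hs => ⟨x, hxC, hs, hax⟩
  filter_upwards [hCs, h𝒰.eventually_sSup_lt hc hχc, h𝒰.eventually_lt_sSup hlim hlim.bot_lt,
    h𝒰.eventually_sSup_notMem hlim, h𝒰.eventually_bddAbove] with s hCs hlt hpos hnot hbdd
  refine hC.2.2 _ hlt hpos.ne' fun d hd => ?_
  obtain ⟨a, has, hda⟩ := exists_lt_of_lt_csSup' hd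
  obtain ⟨x, hxC, hxs, hax⟩ := hCs a has
  exact ⟨x, hxC, hda.trans hax, (le_csSup hbdd hxs).lt_of_ne (ne_of_mem_of_not_mem hxs hnot)⟩

end IsSupercompactMeasure

def IsGoodWitness (f : Ordinal → Ordinal → Ordinal) (κo α ζ : Ordinal) (A : Set Ordinal) :
    Prop :=
  A ⊆ Iio α ∧ (∀ b < α, ∃ c ∈ A, b < c) ∧
    ∀ β ∈ A, ∀ γ ∈ A, β < γ → ∀ ξ, ζ ≤ ξ → ξ < κo → f β ξ < f γ ξ

theorem goodPt_iff {f : Ordinal → Ordinal → Ordinal} {κo α : Ordinal} :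
    GoodPt f κo α ↔ ∃ ζ < κo, ∃ A, IsGoodWitness f κo α ζ A :=
  ⟨fun ⟨A, hsub, hcof, ζ, hζ, hmono⟩ => ⟨ζ, hζ, A, hsub, hcof, hmono⟩,
    fun ⟨ζ, hζ, A, hsub, hcof, hmono⟩ => ⟨A, hsub, hcof, ζ, hζ, hmono⟩⟩

theorem IsGoodWitness.exists_mem_gt {f : Ordinal → Ordinal → Ordinal} {κo α ζ : Ordinal}
    {A : Set Ordinal} (hA : IsGoodWitness f κo α ζ A) {b : Ordinal} (hb : b < α) :
    ∃ a < α, a ∈ A ∧ b < a :=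
  let ⟨a, haA, hba⟩ := hA.2.1 b hb
  ⟨a, hA.1 haA, haA, hba⟩

namespace IsSupercompactMeasure

variable {𝒰 : Ultrafilter (Set Ordinal.{0})} {χ c κ : Cardinal.{0}} {μs : Ordinal → Cardinal}
  {f : Ordinal → Ordinal → Ordinal}

theorem exists_eventually_tail_lt (h𝒰 : IsSupercompactMeasure 𝒰 χ c.ord) (hκχ : κ < χ)
    (hincf : ∀ α β : Ordinal, α < β → β < c.ord →
      ∃ ζ < κ.ord, ∀ ξ, ζ ≤ ξ → ξ < κ.ord → f α ξ < f β ξ)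
    {P : Set Ordinal → Ordinal → Prop} (h : ∀ᶠ s in 𝒰, ∃ a < sSup s, P s a) :
    ∃ N < c.ord, ∃ z < κ.ord, ∀ᶠ s in 𝒰, ∃ a, P s a ∧
      ∀ ξ, z ≤ ξ → ξ < κ.ord → f a ξ < f N ξ := by
  obtain ⟨N, hN, hP⟩ := h𝒰.exists_eventually_of_exists_lt_sSup h
  refine ⟨N, hN, h𝒰.exists_eventually_of_exists_lt (by rwa [Cardinal.card_ord]) ?_⟩
  filter_upwards [hP] with s ⟨a, haN, hPa⟩
  obtain ⟨z, hz, htail⟩ := hincf a N haN hN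
  exact ⟨z, hz, a, hPa, htail⟩

theorem exists_eventually_bound_or_exists_reached_below
    (h𝒰 : IsSupercompactMeasure 𝒰 χ c.ord) (hc : c.IsRegular) {A : Set Ordinal → Set Ordinal}
    (hA : ∀ᶠ s in 𝒰, A s ⊆ Iio (sSup s)) {θ : Ordinal} (hθ : θ.card < c) (F : Ordinal → Ordinal) :
    (∃ γ < θ, ∀ᶠ s in 𝒰, ∀ a ∈ A s, F a < γ) ∨
      ∃ b < c.ord, ∀ γ < θ, ∀ᶠ s in 𝒰, ∃ a < b, a ∈ A s ∧ γ ≤ F a := by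
  refine or_iff_not_imp_left.2 fun hunb => ?_
  push Not at hunb
  refine h𝒰.exists_forall_eventually_of_exists_lt_sSup hc hθ fun γ hγ => ?_
  filter_upwards [hunb γ hγ, hA] with s ⟨a, haA, hγa⟩ hsub
  exact ⟨a, hsub haA, haA, hγa⟩

theorem exists_tail_eventually_bound (h𝒰 : IsSupercompactMeasure 𝒰 χ c.ord) (hc : c.IsRegular)
    (hχc : χ ≤ c) (hκχ : κ < χ) (hlt : ∀ ξ < κ.ord, μs ξ < c)
    (hf : ∀ α < c.ord, ∀ ξ < κ.ord, f α ξ < (μs ξ).ord)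
    (hincf : ∀ α β : Ordinal, α < β → β < c.ord →
      ∃ ζ < κ.ord, ∀ ξ, ζ ≤ ξ → ξ < κ.ord → f α ξ < f β ξ)
    {A : Set Ordinal → Set Ordinal} {ζ₀ : Ordinal} (hζ₀ : ζ₀ < κ.ord)
    (hA : ∀ᶠ s in 𝒰, IsGoodWitness f κ.ord (sSup s) ζ₀ (A s)) :
    ∃ z < κ.ord, ∀ ξ, z ≤ ξ → ξ < κ.ord →
      ∃ γ < (μs ξ).ord, ∀ᶠ s in 𝒰, ∀ a ∈ A s, f a ξ < γ := by
  have hlim := Cardinal.isSuccLimit_ord hc.aleph0_le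
  have hκc : κ.ord.card < c := by rw [Cardinal.card_ord]; exact hκχ.trans_le hχc
  have hdich : ∀ ξ, ∃ b < c.ord, ξ < κ.ord →
      (∃ γ < (μs ξ).ord, ∀ᶠ s in 𝒰, ∀ a ∈ A s, f a ξ < γ) ∨
        ∀ γ < (μs ξ).ord, ∀ᶠ s in 𝒰, ∃ a < b, a ∈ A s ∧ γ ≤ f a ξ := fun ξ => by
    by_cases hξ : ξ < κ.ord
    · obtain h | ⟨b, hb, h⟩ := h𝒰.exists_eventually_bound_or_exists_reached_below hc
        (hA.mono fun _ hs => hs.1) (by rw [Cardinal.card_ord]; exact hlt ξ hξ) (f · ξ)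
      exacts [⟨0, hlim.bot_lt, fun _ => .inl h⟩, ⟨b, hb, fun _ => .inr h⟩]
    · exact ⟨0, hlim.bot_lt, fun h => absurd h hξ⟩
  choose b hb hbξ using hdich
  set β := ⨆ ξ : Iio κ.ord, b ξ
  have hβ : β < c.ord := hc.iSup_Iio_lt_ord_s14 hκc fun ξ _ => hb ξ
  obtain ⟨N, hN, z, hz, hnext⟩ := h𝒰.exists_eventually_tail_lt hκχ hincf
    (P := fun s a => a ∈ A s ∧ β < a) <| (hA.and (h𝒰.eventually_lt_sSup hlim hβ)).mono
      fun _ hs => hs.1.exists_mem_gt hs.2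
  refine ⟨max ζ₀ z, max_lt hζ₀ hz, fun ξ hξ hξκ => (hbξ ξ hξκ).resolve_right fun hreach => ?_⟩
  -- `f N ξ` would be reached at some `a ∈ A s` below `β`, but `f · ξ` increases along `A s`
  -- from `a` to an `a'` above `β` with `f a' ξ < f N ξ`.
  obtain ⟨s, ⟨hs, a, hab, haA, hNa⟩, a', ⟨ha'A, hβa'⟩, ha'N⟩ :=
    ((hA.and (hreach _ (hf N hN ξ hξκ))).and hnext).exists
  have haa' : a < a' := (hab.trans_le (Ordinal.le_iSup_Iio b hξκ)).trans hβa'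
  have hmono := hs.2.2 a haA a' ha'A haa' ξ (le_of_max_le_left hξ) hξκ
  exact (hNa.trans_lt (hmono.trans (ha'N ξ (le_of_max_le_right hξ) hξκ))).false

theorem not_eventually_goodPt (h𝒰 : IsSupercompactMeasure 𝒰 χ c.ord) (hc : c.IsRegular)
    (hχc : χ ≤ c) (hκχ : κ < χ) (hlt : ∀ ξ < κ.ord, μs ξ < c)
    (hf : ∀ α < c.ord, ∀ ξ < κ.ord, f α ξ < (μs ξ).ord)
    (hincf : ∀ α β : Ordinal, α < β → β < c.ord →
      ∃ ζ < κ.ord, ∀ ξ, ζ ≤ ξ → ξ < κ.ord → f α ξ < f β ξ)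
    (hcofinal : ∀ g : Ordinal → Ordinal, (∀ ξ < κ.ord, g ξ < (μs ξ).ord) →
      ∃ α < c.ord, ∃ ζ < κ.ord, ∀ ξ, ζ ≤ ξ → ξ < κ.ord → g ξ < f α ξ) :
    ¬ ∀ᶠ s in 𝒰, GoodPt f κ.ord (sSup s) := by
  intro hgood
  have hlim := Cardinal.isSuccLimit_ord hc.aleph0_le
  have hκ : κ.ord.card < χ := by rwa [Cardinal.card_ord]
  obtain ⟨ζ₀, hζ₀, hζ⟩ := h𝒰.exists_eventually_of_exists_lt hκ (hgood.mono fun _ => goodPt_iff.1)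
  obtain ⟨A, hA⟩ := hζ.choice
  obtain ⟨z, hz, hbound⟩ := h𝒰.exists_tail_eventually_bound hc hχc hκχ hlt hf hincf hζ₀ hA
  have hg : ∀ ξ, ∃ γ, ξ < κ.ord → γ < (μs ξ).ord ∧
      (z ≤ ξ → ∀ᶠ s in 𝒰, ∀ a ∈ A s, f a ξ < γ) := fun ξ => by
    by_cases hξ : z ≤ ξ ∧ ξ < κ.ord
    · obtain ⟨γ, hγ, h⟩ := hbound ξ hξ.1 hξ.2
      exact ⟨γ, fun _ => ⟨hγ, fun _ => h⟩⟩
    · exact ⟨f 0 ξ, fun hξκ => ⟨hf 0 hlim.bot_lt ξ hξκ, fun hzξ => absurd ⟨hzξ, hξκ⟩ hξ⟩⟩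
  choose g hg using hg
  obtain ⟨α, hα, z', hz', hgα⟩ := hcofinal g fun ξ hξ => (hg ξ hξ).1
  obtain ⟨z'', hz'', hbeyond⟩ : ∃ z'' < κ.ord, ∀ᶠ s in 𝒰, ∃ a ∈ A s,
      ∀ ξ, z'' ≤ ξ → ξ < κ.ord → f α ξ < f a ξ := by
    refine h𝒰.exists_eventually_of_exists_lt hκ ?_
    filter_upwards [hA, h𝒰.eventually_lt_sSup hlim hα, h𝒰.eventually_sSup_lt hc hχc]
      with s hs hαs hsc
    obtain ⟨a, has, haA, hαa⟩ := hs.exists_mem_gt hαs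
    obtain ⟨z'', hz'', htail⟩ := hincf α a hαa (has.trans hsc)
    exact ⟨z'', hz'', a, haA, htail⟩
  set ξ := max z (max z' z'')
  have hξ : ξ < κ.ord := max_lt hz (max_lt hz' hz'')
  obtain ⟨s, hsg, a, haA, hαa⟩ := (((hg ξ hξ).2 (le_max_left _ _)).and hbeyond).exists
  refine ((hsg a haA).trans ((hgα ξ ?_ hξ).trans (hαa ξ ?_ hξ))).false
  exacts [le_max_of_le_right (le_max_left _ _), le_max_of_le_right (le_max_right _ _)]

end IsSupercompactMeasure

theorem stmt14_general (μ κ χ : Cardinal.{0}) (μs : Ordinal → Cardinal)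
    (f : Ordinal → Ordinal → Ordinal)
    (hinf : ℵ₀ ≤ μ) (hκ : μ.ord.cof = κ)
    (hκχ : κ < χ) (hχμ : χ < μ)
    (U : Set (Set (Set Ordinal)))
    (hU : IsSupercompactWitness χ (Order.succ μ).ord U)
    (hlt : ∀ ξ < κ.ord, μs ξ < μ)
    (hf : ∀ α < (Order.succ μ).ord, ∀ ξ < κ.ord, f α ξ < (μs ξ).ord)
    (hincf : ∀ α β : Ordinal, α < β → β < (Order.succ μ).ord →
      ∃ ζ < κ.ord, ∀ ξ, ζ ≤ ξ → ξ < κ.ord → f α ξ < f β ξ)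
    (hcofinal : ∀ g : Ordinal → Ordinal, (∀ ξ < κ.ord, g ξ < (μs ξ).ord) →
      ∃ α < (Order.succ μ).ord, ∃ ζ < κ.ord, ∀ ξ, ζ ≤ ξ → ξ < κ.ord → g ξ < f α ξ) :
    IsStationaryIn
      {α : Ordinal | α < (Order.succ μ).ord ∧ κ < α.cof ∧ ¬ GoodPt f κ.ord α}
      (Order.succ μ).ord := by
  have hκ₀ : ℵ₀ ≤ κ :=
    hκ ▸ Ordinal.aleph0_le_cof_iff.2 (Ordinal.one_lt_cof_iff.2 (Cardinal.isSuccLimit_ord hinf))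
  have hc : (Order.succ μ).IsRegular := Cardinal.isRegular_succ hinf
  have hχc : χ ≤ Order.succ μ := (hχμ.trans (Order.lt_succ μ)).le
  obtain ⟨𝒰, h𝒰⟩ := hU.exists_isSupercompactMeasure (hκ₀.trans hκχ.le)
  refine ⟨Cardinal.isSuccLimit_ord hc.aleph0_le, fun C hC => ?_⟩
  by_contra hempty
  refine h𝒰.not_eventually_goodPt hc hχc hκχ (fun ξ hξ => (hlt ξ hξ).trans (Order.lt_succ μ))
    hf hincf hcofinal ?_
  filter_upwards [h𝒰.eventually_sSup_mem hc hχc hC, h𝒰.eventually_lt_cof_sSup hc hχc hκχ,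
    h𝒰.eventually_sSup_lt hc hχc] with s hsC hcof hsc
  by_contra hbad
  exact hempty ⟨_, ⟨hsc, hcof, hbad⟩, hsC⟩

/-- If `κ < χ < μ`, `χ` carries a supercompactness measure on `P_χ(μ⁺)` (equivalently,
there is an elementary embedding `j : V → M` with critical point `χ`, `j(χ) ≥ μ⁺ = λ`
and `M` closed under `λ`-sequences), `μ` is singular of cofinality `κ` and
`⟨f_α : α < μ⁺⟩` is a scale for `μ`, then the set of non-good points of the scale of
cofinality `> κ` is stationary in `μ⁺`. -/
theorem stmt14 (μ κ χ : Cardinal.{0}) (μs : Ordinal → Cardinal)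
    (f : Ordinal → Ordinal → Ordinal)
    (hinf : ℵ₀ ≤ μ) (hκ : μ.ord.cof = κ) (hsing : κ < μ)
    (hκχ : κ < χ) (hχμ : χ < μ)
    (U : Set (Set (Set Ordinal)))
    (hU : IsSupercompactWitness χ (Order.succ μ).ord U)
    (hreg : ∀ ξ < κ.ord, (μs ξ).IsRegular)
    (hμs : ∀ ξ η : Ordinal, ξ < η → η < κ.ord → μs ξ < μs η)
    (hlt : ∀ ξ < κ.ord, μs ξ < μ)
    (hcofμ : ∀ c < μ, ∃ ξ < κ.ord, c < μs ξ)
    (hf : ∀ α < (Order.succ μ).ord, ∀ ξ < κ.ord, f α ξ < (μs ξ).ord)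
    (hincf : ∀ α β : Ordinal, α < β → β < (Order.succ μ).ord →
      ∃ ζ < κ.ord, ∀ ξ, ζ ≤ ξ → ξ < κ.ord → f α ξ < f β ξ)
    (hcofinal : ∀ g : Ordinal → Ordinal, (∀ ξ < κ.ord, g ξ < (μs ξ).ord) →
      ∃ α < (Order.succ μ).ord, ∃ ζ < κ.ord, ∀ ξ, ζ ≤ ξ → ξ < κ.ord → g ξ < f α ξ) :
    IsStationaryIn
      {α : Ordinal | α < (Order.succ μ).ord ∧ κ < α.cof ∧ ¬ GoodPt f κ.ord α}
      (Order.succ μ).ord :=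
  stmt14_general μ κ χ μs f hinf hκ hκχ hχμ U hU hlt hf hincf hcofinal
end

section
/- Let ⟨f_β : β < α⟩ be a <*-increasing sequence in ∏_{ξ<κ} μ_ξ with an exact upper bound g such that cf(g(ξ)) = cf(α) for all sufficiently large ξ < κ, where cf(α) > κ. Then α is a good point: there exist an unbounded A ⊆ α and ζ < κ such that f_β(ξ) < f_γ(ξ) for all β < γ in A and all ξ ≥ ζ. -/
/-!
Let `λ = cf α`, a regular cardinal above `κ`. Beyond the point where `cf (g ξ) = λ`, fix monotone
sequences `⟨e_ξ(i) : i < λ⟩` cofinal in `g ξ` and put `h_i(ξ) = e_ξ(i)`. Each `h_i <* g`, so by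
exactness `h_i <* f_{b(i)}` for some `b(i) < α`; conversely, as `λ > κ` is regular, each `f_β` lies
`<*` below some `h_{i(β)}`. By pigeonhole, a single `ζ < κ` witnesses `h_i < f_{b(i)} < h_{i(b(i))}`
for cofinally many closure points `i < λ` of `i ↦ i(b(i))`, and along those points
`f_{b(i)} < h_{i(b(i))} ≤ h_{i'} < f_{b(i')}` holds everywhere beyond `ζ`.
-/

open Cardinal Set

/-- `h` is eventually strictly below `g` on indices `< κo`. -/
def EvLt (κo : Ordinal) (h g : Ordinal → Ordinal) : Prop :=
  ∃ ζ < κo, ∀ ξ, ζ ≤ ξ → ξ < κo → h ξ < g ξ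

open Ordinal

universe u

namespace EvLt

variable {κo : Ordinal} {p q r : Ordinal → Ordinal}

theorem exists_common {p' q' : Ordinal → Ordinal} (h : EvLt κo p q) (h' : EvLt κo p' q') :
    ∃ ζ < κo, ∀ ξ, ζ ≤ ξ → ξ < κo → p ξ < q ξ ∧ p' ξ < q' ξ := by
  obtain ⟨ζ, hζ, hpq⟩ := h
  obtain ⟨ζ', hζ', hpq'⟩ := h'
  exact ⟨max ζ ζ', max_lt hζ hζ', fun ξ hξ hξκ =>
    ⟨hpq ξ (le_of_max_le_left hξ) hξκ, hpq' ξ (le_of_max_le_right hξ) hξκ⟩⟩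

theorem asymm (hpq : EvLt κo p q) : ¬EvLt κo q p := fun hqp => by
  obtain ⟨ζ, hζ, h⟩ := hpq.exists_common hqp
  exact (h ζ le_rfl hζ).elim lt_asymm

theorem trans_le (hpq : EvLt κo p q) (hqr : ∀ ξ, q ξ ≤ r ξ) : EvLt κo p r :=
  let ⟨ζ, hζ, h⟩ := hpq
  ⟨ζ, hζ, fun ξ hξ hξκ => (h ξ hξ hξκ).trans_le (hqr ξ)⟩

theorem trans (hpq : EvLt κo p q) (hqr : EvLt κo q r) : EvLt κo p r :=
  let ⟨ζ, hζ, h⟩ := hpq.exists_common hqr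
  ⟨ζ, hζ, fun ξ hξ hξκ => (h ξ hξ hξκ).1.trans (h ξ hξ hξκ).2⟩

end EvLt

theorem lt_of_evLt {κo α β γ : Ordinal} {f : Ordinal → Ordinal → Ordinal}
    (hinc : ∀ β γ : Ordinal, β < γ → γ < α → EvLt κo (f β) (f γ)) (hβ : β < α)
    (h : EvLt κo (f β) (f γ)) : β < γ := by
  by_contra! hγβ
  rcases hγβ.lt_or_eq with hγβ | rfl
  · exact h.asymm (hinc γ β hγβ hβ)
  · exact h.asymm h

theorem iSup_Iio_add_one_lt {o a : Ordinal.{u}} {F : Ordinal.{u} → Ordinal.{u}}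
    (ho : o.card < a.cof) (hF : ∀ i < o, F i < a) : ⨆ i : Iio o, F i + 1 < a := by
  apply lift_iSup_add_one_lt_of_lt_cof (f := fun i : Iio o => F i) _ fun i => hF i i.2
  rwa [Cardinal.mk_Iio_ordinal, Cardinal.lift_lift, ← lift_cof, Cardinal.lift_lt]

theorem lt_iSup_Iio_add_one {o i : Ordinal.{u}} (F : Ordinal.{u} → Ordinal.{u}) (hi : i < o) :
    F i < ⨆ j : Iio o, F j + 1 :=
  Order.add_one_le_iff.1 (Ordinal.le_iSup (fun j : Iio o => F j + 1) ⟨i, hi⟩)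

def IsCofinalIn (o : Ordinal) (U : Set Ordinal) : Prop :=
  ∀ a < o, ∃ i ∈ U, a ≤ i ∧ i < o

theorem IsCofinalIn.exists_fiber {o κo : Ordinal.{u}} {U : Set Ordinal.{u}}
    {v : Ordinal.{u} → Ordinal.{u}} (hU : IsCofinalIn o U) (hκo : κo.card < o.cof)
    (hv : ∀ i < o, v i < κo) : ∃ ζ < κo, IsCofinalIn o {i ∈ U | v i = ζ} := by
  by_contra! hfib
  simp only [IsCofinalIn, not_forall, not_exists, not_and] at hfib
  choose! bound hbound_lt hbound using hfib
  have hsup := iSup_Iio_add_one_lt hκo hbound_lt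
  obtain ⟨i, hiU, hsupi, hi⟩ := hU _ hsup
  exact hbound (v i) (hv i hi) i ⟨hiU, rfl⟩
    ((lt_iSup_Iio_add_one bound (hv i hi)).le.trans hsupi) hi

theorem isCofinalIn_closurePoints {c : Cardinal.{u}} {F : Ordinal.{u} → Ordinal.{u}}
    (hc : c.IsRegular) (hc₀ : c ≠ ℵ₀) (hF : ∀ i < c.ord, F i < c.ord) :
    IsCofinalIn c.ord {d | ∀ j < d, F j < d} := by
  set φ : Ordinal → Ordinal := fun x => ⨆ j : Iio x, F j + 1
  have hφ : ∀ x < c.ord, φ x < c.ord := fun x hx =>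
    iSup_Iio_add_one_lt (by rwa [hc.cof_ord, ← lt_ord]) fun j hj => hF j (hj.trans hx)
  refine fun a ha =>
    ⟨nfp φ a, fun j hj => ?_, le_nfp φ a, nfp_lt_ord_of_isRegular hc hc₀ hφ ha⟩
  obtain ⟨n, hn⟩ := lt_nfp_iff.1 hj
  calc F j < φ (φ^[n] a) := lt_iSup_Iio_add_one F hn
    _ = φ^[n + 1] a := (Function.iterate_succ_apply' φ n a).symm
    _ ≤ nfp φ a := iterate_le_nfp φ a (n + 1)

theorem exists_monotone_cofinal_seq {o : Ordinal.{u}} {c : Cardinal.{u}} (ho : o.cof = c)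
    (hc : ℵ₀ ≤ c) :
    ∃ e : Ordinal → Ordinal, Monotone e ∧ (∀ i < c.ord, e i < o) ∧
      ∀ x < o, ∃ i < c.ord, x < e i := by
  obtain ⟨s, hs⟩ := exists_isFundamentalSeq (congrArg Cardinal.ord ho)
  have hlim : Order.IsSuccLimit o := one_lt_cof_iff.1 (ho ▸ one_lt_aleph0.trans_le hc)
  refine ⟨fun i => if hi : i ∈ Iio c.ord then s ⟨i, hi⟩ else o, fun i j hij => ?_,
    fun i hi => ?_, fun x hx => ?_⟩
  · dsimp only
    split_ifs with hi hj hj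
    · exact hs.strictMono.monotone (Subtype.mk_le_mk.2 hij)
    · exact (s _).2.le
    · exact absurd (hij.trans_lt hj) hi
    · exact le_rfl
  · dsimp only
    rw [dif_pos (mem_Iio.2 hi)]
    exact (s _).2
  · obtain ⟨_, ⟨⟨i, hi⟩, rfl⟩, hxi⟩ := hs.isCofinal_range ⟨x + 1, hlim.add_one_lt hx⟩
    refine ⟨i, hi, ?_⟩
    dsimp only
    rw [dif_pos hi]
    exact Order.add_one_le_iff.1 (Subtype.coe_le_coe.2 hxi)

theorem exists_index_evLt_of_cofinal {κo ζ₀ : Ordinal.{u}} {c : Cardinal.{u}}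
    {p g : Ordinal.{u} → Ordinal.{u}} {e : Ordinal.{u} → Ordinal.{u} → Ordinal.{u}}
    (hc : c.IsRegular) (hκc : κo.card < c) (he_mono : ∀ ξ, Monotone (e ξ))
    (he : ∀ ξ, ζ₀ ≤ ξ → ξ < κo → ∀ x < g ξ, ∃ i < c.ord, x < e ξ i)
    (hζ₀ : ζ₀ < κo) (hpg : EvLt κo p g) : ∃ i < c.ord, EvLt κo p fun ξ => e ξ i := by
  obtain ⟨ζ, hζ, hpg⟩ := hpg
  have hidx : ∀ ξ < κo, ∃ i < c.ord, ζ₀ ≤ ξ → ζ ≤ ξ → p ξ < e ξ i := by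
    intro ξ hξ
    by_cases hgood : ζ₀ ≤ ξ ∧ ζ ≤ ξ
    · obtain ⟨i, hi, hpi⟩ := he ξ hgood.1 hξ _ (hpg ξ hgood.2 hξ)
      exact ⟨i, hi, fun _ _ => hpi⟩
    · exact ⟨0, ord_pos.2 (aleph0_pos.trans_le hc.aleph0_le),
        fun h h' => absurd ⟨h, h'⟩ hgood⟩
  choose! idx hidx_lt hidx using hidx
  refine ⟨_, iSup_Iio_add_one_lt (by rwa [hc.cof_ord]) hidx_lt, max ζ₀ ζ, max_lt hζ₀ hζ,
    fun ξ hξ hξκ => ?_⟩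
  exact (hidx ξ hξκ (le_of_max_le_left hξ) (le_of_max_le_right hξ)).trans_le
    (he_mono ξ (lt_iSup_Iio_add_one idx hξκ).le)

theorem goodPt_of_chain {κo α ζ : Ordinal} {f : Ordinal → Ordinal → Ordinal}
    {T : Set Ordinal} {b : Ordinal → Ordinal}
    (hinc : ∀ β γ : Ordinal, β < γ → γ < α → EvLt κo (f β) (f γ)) (hζ : ζ < κo)
    (hb : ∀ i ∈ T, b i < α) (hcof : ∀ β < α, ∃ i ∈ T, β < b i)
    (hchain : ∀ i ∈ T, ∀ j ∈ T, i < j → ∀ ξ, ζ ≤ ξ → ξ < κo → f (b i) ξ < f (b j) ξ) :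
    GoodPt f κo α := by
  refine ⟨b '' T, image_subset_iff.2 hb, fun β hβ => ?_, ζ, hζ, ?_⟩
  · obtain ⟨i, hi, hβi⟩ := hcof β hβ
    exact ⟨b i, mem_image_of_mem b hi, hβi⟩
  · rintro _ ⟨i, hi, rfl⟩ _ ⟨j, hj, rfl⟩ hbij
    rcases lt_trichotomy i j with hij | rfl | hji
    · exact hchain i hi j hj hij
    · exact absurd hbij (lt_irrefl _)
    · exact absurd hbij (lt_of_evLt hinc (hb j hj) ⟨ζ, hζ, hchain j hj i hi hji⟩).not_gt

theorem goodPt_of_interleaved {κo α : Ordinal.{u}} {c : Cardinal.{u}}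
    {f h : Ordinal.{u} → Ordinal.{u} → Ordinal.{u}}
    (hc : c.IsRegular) (hc₀ : c ≠ ℵ₀) (hκc : κo.card < c)
    (hinc : ∀ β γ : Ordinal, β < γ → γ < α → EvLt κo (f β) (f γ))
    (hmono : ∀ ξ, Monotone (h · ξ))
    (hfh : ∀ β < α, ∃ i < c.ord, EvLt κo (f β) (h i))
    (hhf : ∀ i < c.ord, ∃ β < α, EvLt κo (h i) (f β)) :
    GoodPt f κo α := by
  choose! idx hidx_lt hfh using hfh
  choose! b hb_lt hhf using hhf
  have hsandwich : ∀ i < c.ord, ∃ ζ < κo, ∀ ξ, ζ ≤ ξ → ξ < κo →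
      h i ξ < f (b i) ξ ∧ f (b i) ξ < h (idx (b i)) ξ := fun i hi =>
    (hhf i hi).exists_common (hfh _ (hb_lt i hi))
  choose! ζ hζ_lt hζ using hsandwich
  -- At a closure point `d` of `i ↦ idx (b i)`, every `f (b i)` with `i < d` is `<*` below `h d`.
  have hcl := isCofinalIn_closurePoints hc hc₀ fun i hi => hidx_lt _ (hb_lt i hi)
  obtain ⟨ζI, hζI, hT⟩ := hcl.exists_fiber (by rwa [hc.cof_ord]) hζ_lt
  refine goodPt_of_chain (T := {i ∈ {d | ∀ j < d, idx (b j) < d} | ζ i = ζI} ∩ Iio c.ord)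
    hinc hζI (fun i hi => hb_lt i hi.2) (fun β hβ => ?_) ?_
  · obtain ⟨i, hiT, hβi, hi⟩ := hT _ (hidx_lt β hβ)
    refine ⟨i, ⟨hiT, hi⟩, lt_of_evLt hinc hβ ?_⟩
    exact ((hfh β hβ).trans_le fun ξ => hmono ξ hβi).trans (hhf i hi)
  · rintro i ⟨⟨hi_cl, hiζ⟩, hi⟩ j ⟨⟨hj_cl, hjζ⟩, hj⟩ hij ξ hξ hξκ
    calc f (b i) ξ < h (idx (b i)) ξ := (hζ i hi ξ (hiζ ▸ hξ) hξκ).2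
      _ ≤ h j ξ := hmono ξ (hj_cl i hij).le
      _ < f (b j) ξ := (hζ j hj ξ (hjζ ▸ hξ) hξκ).1

theorem stmt16_general (κ : Cardinal) (hκ : κ.IsRegular) (α : Ordinal)
    (μs : Ordinal → Cardinal) (f : Ordinal → Ordinal → Ordinal)
    (g : Ordinal → Ordinal)
    (hg : ∀ ξ < κ.ord, g ξ < (μs ξ).ord)
    (hinc : ∀ β γ : Ordinal, β < γ → γ < α → EvLt κ.ord (f β) (f γ))
    (hub : ∀ β < α, EvLt κ.ord (f β) g)
    (hexact : ∀ h : Ordinal → Ordinal, (∀ ξ < κ.ord, h ξ < (μs ξ).ord) →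
      EvLt κ.ord h g → ∃ β < α, EvLt κ.ord h (f β))
    (hcofg : ∃ ζ < κ.ord, ∀ ξ, ζ ≤ ξ → ξ < κ.ord → (g ξ).cof = α.cof)
    (hcofα : κ < α.cof) :
    GoodPt f κ.ord α := by
  obtain ⟨ζ₀, hζ₀, hcofg⟩ := hcofg
  have hα₀ : ℵ₀ < α.cof := hκ.aleph0_le.trans_lt hcofα
  have hreg : α.cof.IsRegular := isRegular_cof (one_lt_cof_iff.1 (one_lt_aleph0.trans hα₀))
  have hseq : ∀ ξ, ∃ e : Ordinal → Ordinal, Monotone e ∧ (∀ i < α.cof.ord, e i ≤ g ξ) ∧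
      (ζ₀ ≤ ξ → ξ < κ.ord →
        (∀ i < α.cof.ord, e i < g ξ) ∧ ∀ x < g ξ, ∃ i < α.cof.ord, x < e i) := by
    intro ξ
    by_cases hξ : ζ₀ ≤ ξ ∧ ξ < κ.ord
    · obtain ⟨e, he_mono, he_lt, he_cof⟩ :=
        exists_monotone_cofinal_seq (hcofg ξ hξ.1 hξ.2) hα₀.le
      exact ⟨e, he_mono, fun i hi => (he_lt i hi).le, fun _ _ => ⟨he_lt, he_cof⟩⟩
    · exact ⟨0, monotone_const, fun _ _ => zero_le, fun h h' => absurd ⟨h, h'⟩ hξ⟩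
  choose e he_mono he_le he using hseq
  have hκc : κ.ord.card < α.cof := by rwa [card_ord]
  refine goodPt_of_interleaved (h := fun i ξ => e ξ i) hreg hα₀.ne' hκc hinc he_mono
    (fun β hβ => ?_) fun i hi => ?_
  · exact exists_index_evLt_of_cofinal hreg hκc he_mono (fun ξ h h' => (he ξ h h').2) hζ₀
      (hub β hβ)
  · exact hexact _ (fun ξ hξ => (he_le ξ i hi).trans_lt (hg ξ hξ))
      ⟨ζ₀, hζ₀, fun ξ h h' => (he ξ h h').1 i hi⟩

/-- If `⟨f_β : β < α⟩` is `<*`-increasing in `∏_{ξ<κ} μ_ξ` with an exact upper bound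
`g` such that `cf (g ξ) = cf α` for all sufficiently large `ξ < κ`, and `cf α > κ`,
then `α` is a good point. -/
theorem stmt16 (κ : Cardinal) (hκ : κ.IsRegular) (α : Ordinal)
    (μs : Ordinal → Cardinal) (f : Ordinal → Ordinal → Ordinal)
    (g : Ordinal → Ordinal)
    (hf : ∀ β < α, ∀ ξ < κ.ord, f β ξ < (μs ξ).ord)
    (hg : ∀ ξ < κ.ord, g ξ < (μs ξ).ord)
    (hinc : ∀ β γ : Ordinal, β < γ → γ < α → EvLt κ.ord (f β) (f γ))
    (hub : ∀ β < α, EvLt κ.ord (f β) g)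
    (hexact : ∀ h : Ordinal → Ordinal, (∀ ξ < κ.ord, h ξ < (μs ξ).ord) →
      EvLt κ.ord h g → ∃ β < α, EvLt κ.ord h (f β))
    (hcofg : ∃ ζ < κ.ord, ∀ ξ, ζ ≤ ξ → ξ < κ.ord → (g ξ).cof = α.cof)
    (hcofα : κ < α.cof) :
    GoodPt f κ.ord α :=
  stmt16_general κ hκ α μs f g hg hinc hub hexact hcofg hcofα
end
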